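/- arXiv:1906.10053 — 5 statements merged into one kernel-verified Lean document; each statement's English description precedes it below -/
import Mathlib

section
/- The forward-backward envelope φ_Γ is a real-valued, locally Lipschitz-continuous function on ℝ^{n_1}×⋯×ℝ^{n_N}, and φ_Γ(x) ≤ Φ(x) holds for every x. -/
open Filter Topology Metric Bornology Set
open scoped RealInnerProductSpace

noncomputable section

variable {N : ℕ} {E : Fin N → Type*}
  [∀ i, NormedAddCommGroup (E i)] [∀ i, InnerProductSpace ℝ (E i)]
  [∀ i, CompleteSpace (E i)]

/-- `F(x) = (1/N) ∑ᵢ fᵢ(xᵢ)`, the smooth separable part of the cost. -/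
def Fsum (f : ∀ i, E i → ℝ) (x : PiLp 2 E) : ℝ := (N : ℝ)⁻¹ * ∑ i, f i (x i)

/-- `Φ = F + G`, the total cost, extended-real-valued. -/
def Phi (f : ∀ i, E i → ℝ) (G : PiLp 2 E → EReal) (x : PiLp 2 E) : EReal :=
  ((Fsum f x : ℝ) : EReal) + G x

/-- The model `M(w,x) = F(x) + ⟨∇F(x),w-x⟩ + G(w) + ½‖w-x‖²_{Γ⁻¹}`, where `∇F(x)ᵢ = f'ᵢ(xᵢ)/N`
and `Γ = blockdiag(γ₁ I, …, γ_N I)`. -/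
def Mdl (f : ∀ i, E i → ℝ) (f' : ∀ i, E i → E i) (γ : Fin N → ℝ)
    (G : PiLp 2 E → EReal) (w x : PiLp 2 E) : EReal :=
  ((Fsum f x + (N : ℝ)⁻¹ * ∑ i, ⟪f' i (x i), w i - x i⟫
      + 2⁻¹ * ∑ i, (γ i)⁻¹ * ‖w i - x i‖ ^ 2 : ℝ) : EReal) + G w

/-- The forward-backward operator `T(x) = argmin_w M(w,x)`. -/
def Tmap (f : ∀ i, E i → ℝ) (f' : ∀ i, E i → E i) (γ : Fin N → ℝ)
    (G : PiLp 2 E → EReal) (x : PiLp 2 E) : Set (PiLp 2 E) :=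
  {z | ∀ w, Mdl f f' γ G z x ≤ Mdl f f' γ G w x}

/-- The `Γ⁻¹`-proximal mapping
`prox_G^{Γ⁻¹}(u) = argmin_w { G(w) + ½‖w-u‖²_{Γ⁻¹} }`. -/
def proxSet (γ : Fin N → ℝ) (G : PiLp 2 E → EReal) (u : PiLp 2 E) : Set (PiLp 2 E) :=
  {z | ∀ w, G z + ((2⁻¹ * ∑ i, (γ i)⁻¹ * ‖z i - u i‖ ^ 2 : ℝ) : EReal)
        ≤ G w + ((2⁻¹ * ∑ i, (γ i)⁻¹ * ‖w i - u i‖ ^ 2 : ℝ) : EReal)}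

/-- The forward (gradient) step `x - Γ∇F(x)`. -/
def fwd (f' : ∀ i, E i → E i) (γ : Fin N → ℝ) (x : PiLp 2 E) : PiLp 2 E :=
  WithLp.toLp 2 (fun i => x i - (γ i * (N : ℝ)⁻¹) • f' i (x i))

/-- Convexity for an extended-real-valued function. -/
def ERealConvex {X : Type*} [AddCommMonoid X] [Module ℝ X] (G : X → EReal) : Prop :=
  ∀ x y : X, ∀ a b : ℝ, 0 ≤ a → 0 ≤ b → a + b = 1 →
    G (a • x + b • y) ≤ (a : ℝ) * G x + (b : ℝ) * G y

/-- The regular (Fréchet) subdifferential `∂̂h(x)` of an extended-real-valued function. -/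
def frechetSubdiff {X : Type*} [NormedAddCommGroup X] [InnerProductSpace ℝ X]
    (h : X → EReal) (x : X) : Set X :=
  {v | h x ≠ ⊤ ∧ h x ≠ ⊥ ∧ ∀ ε : ℝ, 0 < ε →
      ∀ᶠ w in 𝓝 x, h x + ((⟪v, w - x⟫ - ε * ‖w - x‖ : ℝ) : EReal) ≤ h w}

/-- The limiting subdifferential `∂h(x)`. -/
def limitingSubdiff {X : Type*} [NormedAddCommGroup X] [InnerProductSpace ℝ X]
    (h : X → EReal) (x : X) : Set X :=
  {v | ∃ u w : ℕ → X, (∀ k, w k ∈ frechetSubdiff h (u k)) ∧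
      Tendsto u atTop (𝓝 x) ∧ Tendsto (fun k => h (u k)) atTop (𝓝 (h x)) ∧
      Tendsto w atTop (𝓝 v)}

/-- The Kurdyka-Łojasiewicz property with exponent `θ` (at every point of `dom ∂h`),
with desingularizing function `ψ(s) = ϱ s^{1-θ}`. -/
def HasKLExponent {X : Type*} [NormedAddCommGroup X] [InnerProductSpace ℝ X]
    (h : X → EReal) (θ : ℝ) : Prop :=
  ∀ xb : X, (limitingSubdiff h xb).Nonempty →
    ∃ ε η ϱ : ℝ, 0 < ε ∧ 0 < η ∧ 0 < ϱ ∧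
      ∀ w : X, ‖w - xb‖ < ε → h xb < h w → h w < h xb + ((η : ℝ) : EReal) →
        ∀ v ∈ limitingSubdiff h w,
          1 ≤ ϱ * (1 - θ) * (h w - h xb).toReal ^ (-θ) * ‖v‖

open scoped NNReal

/-! The descent lemma bounds the model from below by `M(w,x) ≥ Φ(w) + c‖w - x‖²`, with `c > 0`
since `γᵢ Lᵢ < N`; so `φ_Γ ≥ min Φ` is finite, and `w = x` gives `φ_Γ ≤ Φ`.
Expanding the square, `M(w,x) = a(x) + ⟪w, b(x)⟫ + r(w)` with `a`, `b` locally Lipschitz. For `x`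
near `x₀` the same quadratic growth keeps the near-minimizers `w` in a bounded set, on which the
functions `M(w,·)` are uniformly Lipschitz; an infimum of uniformly Lipschitz functions is
Lipschitz. -/

theorem LocallyLipschitz.finset_sum {ι α F : Type*} [PseudoEMetricSpace α]
    [SeminormedAddCommGroup F] (s : Finset ι) {g : ι → α → F}
    (hg : ∀ i ∈ s, LocallyLipschitz (g i)) : LocallyLipschitz fun x => ∑ i ∈ s, g i x := by
  classical
  induction s using Finset.induction_on with
  | empty => simpa using LocallyLipschitz.const (0 : F)
  | insert j s hj ih =>
    simp only [Finset.sum_insert hj]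
    exact (hg j (s.mem_insert_self j)).add fun x => ih (fun i hi => hg i (s.mem_insert_of_mem hi)) x

theorem LocallyLipschitz.const_smul {α 𝕜 F : Type*} [PseudoEMetricSpace α]
    [SeminormedAddGroup 𝕜] [SeminormedAddGroup F] [SMulZeroClass 𝕜 F] [IsBoundedSMul 𝕜 F]
    {g : α → F} (hg : LocallyLipschitz g) (c : 𝕜) : LocallyLipschitz fun x => c • g x :=
  (lipschitzWith_smul c).locallyLipschitz.comp hg

theorem LocallyLipschitz.inner {α H : Type*} [PseudoEMetricSpace α] [NormedAddCommGroup H]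
    [InnerProductSpace ℝ H] {g₁ g₂ : α → H} (h₁ : LocallyLipschitz g₁)
    (h₂ : LocallyLipschitz g₂) : LocallyLipschitz fun x => ⟪g₁ x, g₂ x⟫ :=
  (contDiff_inner (n := 1)).locallyLipschitz.comp (h₁.prodMk h₂)

theorem contDiff_one_of_hasGradientAt {F : Type*} [NormedAddCommGroup F]
    [InnerProductSpace ℝ F] [CompleteSpace F] {f : F → ℝ} {f' : F → F}
    (hf : ∀ u, HasGradientAt f (f' u) u) (hf' : Continuous f') : ContDiff ℝ 1 f := by
  refine contDiff_one_iff_fderiv.2 ⟨fun u => (hf u).differentiableAt, ?_⟩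
  rw [show fderiv ℝ f = InnerProductSpace.toDual ℝ F ∘ f' from
    funext fun u => (hf u).hasFDerivAt.fderiv]
  exact (InnerProductSpace.toDual ℝ F).continuous.comp hf'

theorem PiLp.lipschitzWith_toLp_map {ι : Type*} [Fintype ι] {β γ : ι → Type*}
    [∀ i, SeminormedAddCommGroup (β i)] [∀ i, SeminormedAddCommGroup (γ i)]
    {g : ∀ i, β i → γ i} {K : ι → ℝ≥0} (hg : ∀ i, LipschitzWith (K i) (g i)) :
    LipschitzWith (Finset.univ.sup K) fun x : PiLp 2 β => WithLp.toLp 2 fun i => g i (x i) := by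
  refine LipschitzWith.of_dist_le_mul fun x y => ?_
  rw [PiLp.dist_eq_of_L2, PiLp.dist_eq_of_L2, ← Real.sqrt_sq (Finset.univ.sup K).coe_nonneg,
    ← Real.sqrt_mul (by positivity), Finset.mul_sum]
  gcongr with i
  rw [← mul_pow]
  exact pow_le_pow_left₀ dist_nonneg
    (((hg i).weaken (Finset.le_sup (Finset.mem_univ i))).dist_le_mul _ _) 2

theorem EReal.coe_ciInf {ι : Sort*} [Nonempty ι] {g : ι → ℝ} (hg : BddBelow (range g)) :
    ((⨅ i, g i : ℝ) : EReal) = ⨅ i, (g i : EReal) :=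
  Monotone.map_ciInf_of_continuousAt continuous_coe_real_ereal.continuousAt
    EReal.coe_strictMono.monotone hg

theorem iInf_eq_iInf_subtype_of_eq_top {α ι : Type*} [CompleteLattice α] {g : ι → α}
    {p : ι → Prop} (hg : ∀ i, ¬p i → g i = ⊤) : ⨅ i, g i = ⨅ i : Subtype p, g i := by
  refine le_antisymm (le_iInf fun i => iInf_le _ _) (le_iInf fun i => ?_)
  by_cases hi : p i
  · exact iInf_le_of_le ⟨i, hi⟩ le_rfl
  · simp [hg i hi]

theorem le_add_inner_add_sq_of_lipschitz_gradient {F : Type*} [NormedAddCommGroup F]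
    [InnerProductSpace ℝ F] [CompleteSpace F] {f : F → ℝ} {f' : F → F} {L : ℝ}
    (hf : ∀ u, HasGradientAt f (f' u) u) (hlip : ∀ u v, ‖f' u - f' v‖ ≤ L * ‖u - v‖)
    (x w : F) : f w ≤ f x + ⟪f' x, w - x⟫ + L / 2 * ‖w - x‖ ^ 2 := by
  set d := w - x
  let g : ℝ → ℝ := fun t => f (x + t • d) - t * ⟪f' x, d⟫ - t ^ 2 * (L / 2 * ‖d‖ ^ 2)
  have hg : ∀ t, HasDerivAt g (⟪f' (x + t • d), d⟫ - ⟪f' x, d⟫ - 2 * t * (L / 2 * ‖d‖ ^ 2)) t := by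
    intro t
    have hline : HasDerivAt (fun t : ℝ => x + t • d) d t := by
      simpa using ((hasDerivAt_id t).smul_const d).const_add x
    have hf_line := (hf (x + t • d)).hasFDerivAt.comp_hasDerivAt t hline
    simp only [InnerProductSpace.toDual_apply_apply] at hf_line
    exact ((hf_line.sub ((hasDerivAt_id t).mul_const ⟪f' x, d⟫)).sub
      ((hasDerivAt_pow 2 t).mul_const (L / 2 * ‖d‖ ^ 2))).congr_deriv (by simp)
  have hanti : AntitoneOn g (Icc 0 1) := by
    refine antitoneOn_of_deriv_nonpos (convex_Icc 0 1)
      (fun t _ => (hg t).continuousAt.continuousWithinAt)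
      (fun t _ => (hg t).differentiableAt.differentiableWithinAt) fun t ht => ?_
    rw [interior_Icc] at ht
    have hinc : ⟪f' (x + t • d) - f' x, d⟫ ≤ t * L * ‖d‖ ^ 2 :=
      calc ⟪f' (x + t • d) - f' x, d⟫ ≤ ‖f' (x + t • d) - f' x‖ * ‖d‖ := real_inner_le_norm _ _
        _ ≤ L * ‖(x + t • d) - x‖ * ‖d‖ := by gcongr; exact hlip _ _
        _ = t * L * ‖d‖ ^ 2 := by
          rw [add_sub_cancel_left, norm_smul, Real.norm_of_nonneg ht.1.le]; ring
    rw [(hg t).deriv, ← inner_sub_left]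
    linarith
  have h01 := hanti (left_mem_Icc.2 zero_le_one) (right_mem_Icc.2 zero_le_one) zero_le_one
  simp only [g, zero_smul, one_smul, add_zero, zero_mul, sub_zero, one_pow, one_mul,
    ne_eq, OfNat.ofNat_ne_zero, not_false_eq_true, zero_pow] at h01
  rw [show x + d = w from add_sub_cancel x w] at h01
  linarith

theorem LipschitzOnWith.ciInf {ι α : Type*} [Nonempty ι] [PseudoMetricSpace α]
    {h : ι → α → ℝ} {s : Set α} {K : ℝ≥0}
    (hbdd : ∀ x ∈ s, BddBelow (range fun i => h i x))
    (hlip : ∀ i, (∃ y ∈ s, h i y < (⨅ j, h j y) + 1) → LipschitzOnWith K (h i) s) :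
    LipschitzOnWith K (fun x => ⨅ i, h i x) s := by
  refine LipschitzOnWith.of_le_add_mul K fun x hx y hy => le_of_forall_pos_lt_add fun ε hε => ?_
  obtain ⟨i, hi⟩ := exists_lt_of_ciInf_lt (lt_add_of_pos_right (⨅ j, h j y) (lt_min hε one_pos))
  have hnear : h i y < (⨅ j, h j y) + 1 := hi.trans_le (by gcongr; exact min_le_right _ _)
  calc ⨅ j, h j x ≤ h i x := ciInf_le (hbdd x hx) i
    _ ≤ h i y + K * dist x y := (hlip i ⟨y, hy, hnear⟩).le_add_mul hx hy
    _ < (⨅ j, h j y) + K * dist x y + ε := by linarith [min_le_left ε 1]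

theorem locallyLipschitz_ciInf_of_quadraticGrowth {ι H : Type*} [Nonempty ι]
    [NormedAddCommGroup H] [InnerProductSpace ℝ H] {a : H → ℝ} {b : H → H}
    (ha : LocallyLipschitz a) (hb : LocallyLipschitz b) (u : ι → H) (r : ι → ℝ) {ℓ c : ℝ}
    (hc : 0 < c) (hgrowth : ∀ i x, ℓ + c * ‖u i - x‖ ^ 2 ≤ a x + ⟪u i, b x⟫ + r i) :
    LocallyLipschitz fun x => ⨅ i, a x + ⟪u i, b x⟫ + r i := by
  intro x₀
  obtain ⟨Ka, ta, hta, hKa⟩ := ha x₀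
  obtain ⟨Kb, tb, htb, hKb⟩ := hb x₀
  obtain ⟨i₀⟩ := ‹Nonempty ι›
  set h : ι → H → ℝ := fun i x => a x + ⟪u i, b x⟫ + r i
  have hbdd : ∀ x, BddBelow (range fun i => h i x) := fun x =>
    ⟨ℓ, by rintro _ ⟨i, rfl⟩; linarith [hgrowth i x, mul_nonneg hc.le (sq_nonneg ‖u i - x‖)]⟩
  have hcont : Continuous (h i₀) :=
    (ha.continuous.add (continuous_const.inner hb.continuous)).add continuous_const
  set R : ℝ := ‖x₀‖ + 1 + √((h i₀ x₀ + 2 - ℓ) / c)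
  set s := ta ∩ tb ∩ ball x₀ 1 ∩ {y | h i₀ y < h i₀ x₀ + 1}
  have hs : s ∈ 𝓝 x₀ := inter_mem (inter_mem (inter_mem hta htb) (ball_mem_nhds x₀ one_pos))
    (hcont.continuousAt.eventually_lt continuousAt_const (lt_add_one _))
  refine ⟨Ka + R.toNNReal * Kb, s, hs, LipschitzOnWith.ciInf (fun x _ => hbdd x) ?_⟩
  rintro i ⟨y, ⟨⟨⟨-, -⟩, hy⟩, hy₀⟩, hiy⟩
  have hdist : ‖u i - y‖ ≤ √((h i₀ x₀ + 2 - ℓ) / c) := by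
    refine Real.le_sqrt_of_sq_le ((le_div_iff₀ hc).2 ?_)
    have := ciInf_le (hbdd y) i₀
    nlinarith [hgrowth i y, hy₀.out]
  have hu : ‖u i‖ ≤ R := by
    have := norm_le_norm_add_norm_sub' (u i) y
    have := norm_sub_norm_le y x₀
    have := mem_ball_iff_norm.1 hy
    linarith
  have hinner : LipschitzOnWith (R.toNNReal * Kb) (fun x => ⟪u i, b x⟫) tb := by
    refine ((innerSL ℝ (u i)).lipschitz.comp_lipschitzOnWith hKb).weaken ?_
    gcongr
    rw [← NNReal.coe_le_coe, coe_nnnorm, innerSL_apply_norm]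
    exact hu.trans (Real.le_coe_toNNReal R)
  exact ((hKa.mono fun x hx => hx.1.1.1).add (hinner.mono fun x hx => hx.1.1.2)).add
    (LipschitzWith.const (r i)).lipschitzOnWith |>.weaken (by simp)

section ForwardBackwardEnvelope

variable (f : ∀ i, E i → ℝ) (f' : ∀ i, E i → E i) (γ : Fin N → ℝ)

/-- With `modelSlope`, the `x`-dependent part of `Mdl` once the square `‖w - x‖²_{Γ⁻¹}` is
expanded (`Mdl_eq_coe`). -/
def modelOffset (x : PiLp 2 E) : ℝ :=
  ∑ i, ((N : ℝ)⁻¹ * (f i (x i) - ⟪f' i (x i), x i⟫) + 2⁻¹ * (γ i)⁻¹ * ‖x i‖ ^ 2)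

def modelSlope (x : PiLp 2 E) : PiLp 2 E :=
  WithLp.toLp 2 fun i => (N : ℝ)⁻¹ • f' i (x i) - (γ i)⁻¹ • x i

theorem locallyLipschitz_modelOffset (hf : ∀ i (u : E i), HasGradientAt (f i) (f' i u) u)
    (hf' : ∀ i, LocallyLipschitz (f' i)) : LocallyLipschitz (modelOffset f f' γ) := by
  refine LocallyLipschitz.finset_sum _ fun i _ => ?_
  have hfi := (contDiff_one_of_hasGradientAt (hf i) (hf' i).continuous).locallyLipschitz
  have hblock : LocallyLipschitz fun u : E i =>
      (N : ℝ)⁻¹ * (f i u - ⟪f' i u, u⟫) + 2⁻¹ * (γ i)⁻¹ * ‖u‖ ^ 2 :=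
    ((hfi.sub ((hf' i).inner LocallyLipschitz.id)).const_smul (N : ℝ)⁻¹).add
      ((contDiff_norm_sq ℝ (n := 1)).locallyLipschitz.const_smul (2⁻¹ * (γ i)⁻¹))
  exact hblock.comp (PiLp.proj (𝕜 := ℝ) 2 E i).lipschitz.locallyLipschitz

omit [∀ i, CompleteSpace (E i)] in
theorem locallyLipschitz_modelSlope {K : Fin N → ℝ≥0} (hf' : ∀ i, LipschitzWith (K i) (f' i)) :
    LocallyLipschitz (modelSlope f' γ) :=
  have hcomponent : ∀ i, LipschitzWith (‖(N : ℝ)⁻¹‖₊ * K i + ‖(γ i)⁻¹‖₊ * 1)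
      fun u => (N : ℝ)⁻¹ • f' i u - (γ i)⁻¹ • u := fun i =>
    ((lipschitzWith_smul _).comp (hf' i)).sub ((lipschitzWith_smul _).comp LipschitzWith.id)
  (PiLp.lipschitzWith_toLp_map hcomponent).locallyLipschitz

omit [∀ i, CompleteSpace (E i)] in
theorem Mdl_eq_coe {G : PiLp 2 E → EReal} {w : PiLp 2 E} (hw : G w ≠ ⊤) (hw' : G w ≠ ⊥)
    (x : PiLp 2 E) :
    Mdl f f' γ G w x = ((modelOffset f f' γ x + ⟪w, modelSlope f' γ x⟫
      + (2⁻¹ * ∑ i, (γ i)⁻¹ * ‖w i‖ ^ 2 + (G w).toReal) : ℝ) : EReal) := by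
  rw [← add_assoc, EReal.coe_add, EReal.coe_toReal hw hw', Mdl]
  congr 2
  simp only [modelOffset, modelSlope, Fsum, PiLp.inner_apply, Finset.mul_sum,
    ← Finset.sum_add_distrib]
  refine Finset.sum_congr rfl fun i _ => ?_
  simp only [inner_sub_right, inner_smul_right, norm_sub_sq_real,
    real_inner_comm (x i) (w i), real_inner_comm (f' i (x i)) (w i)]
  ring

omit [∀ i, CompleteSpace (E i)] in
theorem Mdl_eq_top {G : PiLp 2 E → EReal} {w : PiLp 2 E} (hw : G w = ⊤) (x : PiLp 2 E) :
    Mdl f f' γ G w x = ⊤ := by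
  rw [Mdl, hw, EReal.coe_add_top]

omit [∀ i, CompleteSpace (E i)] in
theorem Mdl_self (G : PiLp 2 E → EReal) (x : PiLp 2 E) : Mdl f f' γ G x x = Phi f G x := by
  simp [Mdl, Phi]

theorem exists_pos_Phi_add_sq_le_Mdl (L : Fin N → ℝ)
    (hf : ∀ i (u : E i), HasGradientAt (f i) (f' i u) u)
    (hlip : ∀ i (u v : E i), ‖f' i u - f' i v‖ ≤ L i * ‖u - v‖)
    (hγ : ∀ i, 0 < γ i) (hγL : ∀ i, γ i * L i < (N : ℝ)) :
    ∃ c > 0, ∀ (G : PiLp 2 E → EReal) w x,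
      Phi f G w + ((c * ‖w - x‖ ^ 2 : ℝ) : EReal) ≤ Mdl f f' γ G w x := by
  -- `γᵢ⁻¹ - Lᵢ / N` is the curvature of the model left over once the descent lemma bounds `fᵢ / N`
  obtain ⟨c, hc, hci⟩ : ∃ c > 0, ∀ i, c ≤ ((γ i)⁻¹ - L i / N) / 2 := by
    have hpos : ∀ i, 0 < ((γ i)⁻¹ - L i / N) / 2 := fun i => by
      have hN : (0 : ℝ) < N := by exact_mod_cast i.pos
      have : L i / N < (γ i)⁻¹ := by
        rw [div_lt_iff₀ hN, inv_mul_eq_div, lt_div_iff₀ (hγ i)]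
        linarith [hγL i]
      linarith
    rcases isEmpty_or_nonempty (Fin N) with hN | hN
    · exact ⟨1, one_pos, fun i => hN.elim i⟩
    · obtain ⟨i₀, hi₀⟩ := Finite.exists_min fun i => ((γ i)⁻¹ - L i / N) / 2
      exact ⟨_, hpos i₀, hi₀⟩
  refine ⟨c, hc, fun G w x => ?_⟩
  have hblock : ∀ i, (N : ℝ)⁻¹ * f i (w i) + c * ‖w i - x i‖ ^ 2 ≤
      (N : ℝ)⁻¹ * f i (x i) + (N : ℝ)⁻¹ * ⟪f' i (x i), w i - x i⟫
        + 2⁻¹ * ((γ i)⁻¹ * ‖w i - x i‖ ^ 2) := fun i => by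
    have hdesc := mul_le_mul_of_nonneg_left
      (le_add_inner_add_sq_of_lipschitz_gradient (hf i) (hlip i) (x i) (w i))
      (inv_nonneg.2 (Nat.cast_nonneg N))
    have := mul_le_mul_of_nonneg_right (hci i) (sq_nonneg ‖w i - x i‖)
    linear_combination hdesc + this
  have hreal : Fsum f w + c * ‖w - x‖ ^ 2 ≤ Fsum f x
      + (N : ℝ)⁻¹ * ∑ i, ⟪f' i (x i), w i - x i⟫ + 2⁻¹ * ∑ i, (γ i)⁻¹ * ‖w i - x i‖ ^ 2 := by
    simp only [Fsum, PiLp.norm_sq_eq_of_L2, PiLp.sub_apply, Finset.mul_sum,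
      ← Finset.sum_add_distrib]
    exact Finset.sum_le_sum fun i _ => hblock i
  calc Phi f G w + ((c * ‖w - x‖ ^ 2 : ℝ) : EReal)
      = ((Fsum f w + c * ‖w - x‖ ^ 2 : ℝ) : EReal) + G w := by
        rw [Phi, EReal.coe_add, add_right_comm]
    _ ≤ Mdl f f' γ G w x := add_le_add_left (EReal.coe_le_coe_iff.2 hreal) _

end ForwardBackwardEnvelope

theorem fbe_realValued_locallyLipschitz_le_cost_general
    (f : ∀ i, E i → ℝ) (f' : ∀ i, E i → E i) (L γ : Fin N → ℝ)
    (G : PiLp 2 E → EReal)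
    (hf : ∀ i (u : E i), HasGradientAt (f i) (f' i u) u)
    (hlip : ∀ i (u v : E i), ‖f' i u - f' i v‖ ≤ L i * ‖u - v‖)
    (hγ : ∀ i, 0 < γ i) (hγL : ∀ i, γ i * L i < (N : ℝ))
    (hGproper : ∃ w, G w ≠ ⊤) (hGbot : ∀ w, G w ≠ ⊥)
    (hargmin : ∃ xs : PiLp 2 E, ∀ w, Phi f G xs ≤ Phi f G w)
    :
    ∃ φ : PiLp 2 E → ℝ,
      (∀ x, ((φ x : ℝ) : EReal) = ⨅ w, Mdl f f' γ G w x) ∧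
      LocallyLipschitz φ ∧
      (∀ x, ((φ x : ℝ) : EReal) ≤ Phi f G x) := by
  obtain ⟨w₀, hw₀⟩ := hGproper
  obtain ⟨xs, hxs⟩ := hargmin
  have : Nonempty {w // G w ≠ ⊤} := ⟨⟨w₀, hw₀⟩⟩
  have hf' : ∀ i, LipschitzWith (L i).toNNReal (f' i) := fun i =>
    LipschitzWith.of_dist_le' fun u v => by simpa only [dist_eq_norm] using hlip i u v
  obtain ⟨c, hc, hgrowth⟩ := exists_pos_Phi_add_sq_le_Mdl f f' γ L hf hlip hγ hγL
  set ℓ := (Phi f G xs).toReal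
  set r : {w // G w ≠ ⊤} → ℝ := fun w => 2⁻¹ * ∑ i, (γ i)⁻¹ * ‖w.1 i‖ ^ 2 + (G w).toReal
  set m := fun (w : {w // G w ≠ ⊤}) x => modelOffset f f' γ x + ⟪w.1, modelSlope f' γ x⟫ + r w
  have hMdl : ∀ w x, Mdl f f' γ G w.1 x = (m w x : EReal) := fun w x =>
    Mdl_eq_coe f f' γ w.2 (hGbot w) x
  have hℓ : ∀ w, (ℓ : EReal) ≤ Phi f G w := fun w =>
    (EReal.coe_toReal_le (EReal.add_ne_bot_iff.2 ⟨EReal.coe_ne_bot _, hGbot xs⟩)).trans (hxs w)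
  have hquad : ∀ w x, ℓ + c * ‖w.1 - x‖ ^ 2 ≤ m w x := fun w x => by
    have := (add_le_add_left (hℓ w) _).trans (hgrowth G w x)
    rwa [hMdl, ← EReal.coe_add, EReal.coe_le_coe_iff] at this
  have hφ : ∀ x, ((⨅ w, m w x : ℝ) : EReal) = ⨅ w, Mdl f f' γ G w x := fun x => by
    rw [iInf_eq_iInf_subtype_of_eq_top fun w hw => Mdl_eq_top f f' γ (not_not.1 hw) x,
      EReal.coe_ciInf ⟨ℓ, ?_⟩]
    · simp only [hMdl]
    rintro _ ⟨w, rfl⟩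
    linarith [hquad w x, mul_nonneg hc.le (sq_nonneg ‖w.1 - x‖)]
  refine ⟨fun x => ⨅ w, m w x, hφ, ?_, fun x => (hφ x).trans_le ?_⟩
  · exact locallyLipschitz_ciInf_of_quadraticGrowth
      (locallyLipschitz_modelOffset f f' γ hf fun i => (hf' i).locallyLipschitz)
      (locallyLipschitz_modelSlope f' γ hf') Subtype.val r hc hquad
  · exact (iInf_le _ x).trans_eq (Mdl_self f f' γ G x)

/-- Lemma 2.3, first part: the forward-backward envelope φ_Γ is a
real-valued, locally Lipschitz continuous function, and φ_Γ ≤ Φ everywhere. -/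
theorem fbe_realValued_locallyLipschitz_le_cost
    (f : ∀ i, E i → ℝ) (f' : ∀ i, E i → E i) (L γ : Fin N → ℝ)
    (G : PiLp 2 E → EReal)
    (hf : ∀ i (u : E i), HasGradientAt (f i) (f' i u) u)
    (hL : ∀ i, 0 ≤ L i)
    (hlip : ∀ i (u v : E i), ‖f' i u - f' i v‖ ≤ L i * ‖u - v‖)
    (hγ : ∀ i, 0 < γ i) (hγL : ∀ i, γ i * L i < (N : ℝ))
    (hGlsc : LowerSemicontinuous G)
    (hGproper : ∃ w, G w ≠ ⊤) (hGbot : ∀ w, G w ≠ ⊥)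
    (hargmin : ∃ xs : PiLp 2 E, ∀ w, Phi f G xs ≤ Phi f G w)
    :
    ∃ φ : PiLp 2 E → ℝ,
      (∀ x, ((φ x : ℝ) : EReal) = ⨅ w, Mdl f f' γ G w x) ∧
      LocallyLipschitz φ ∧
      (∀ x, ((φ x : ℝ) : EReal) ≤ Phi f G x) :=
  fbe_realValued_locallyLipschitz_le_cost_general f f' L γ G hf hlip hγ hγL hGproper hGbot hargmin
end
end

section
/- For every x∈ℝ^{n_1}×⋯×ℝ^{n_N} and every z∈T(x), one has ½‖z−x‖²_{Γ^{-1}−Λ_F} ≤ φ_Γ(x) − Φ(z) ≤ ½‖z−x‖²_{Γ^{-1}+Λ_F}, where Λ_F=(1/N)·blockdiag(L_{f_1}I_{n_1},…,L_{f_N}I_{n_N}). -/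
open Filter Topology Metric Bornology Set
open scoped RealInnerProductSpace

noncomputable section

variable {N : ℕ} {E : Fin N → Type*}
  [∀ i, NormedAddCommGroup (E i)] [∀ i, InnerProductSpace ℝ (E i)]
  [∀ i, CompleteSpace (E i)]

/-! Since `z` minimises the model at `x`, `φ(x)` equals the model at `z`, which differs from
`Φ(z) + ½‖z - x‖²_{Γ⁻¹}` exactly by the linearisation error `F(x) + ⟨∇F(x), z - x⟩ - F(z)`.
The descent lemma, applied block by block, bounds this error by `½‖z - x‖²_{Λ_F}`. The descent
lemma itself compares `t ↦ f(x + t v) - f(x) - t ⟨∇f(x), v⟩` with `t ↦ (L/2) t² ‖v‖²`, whose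
derivative dominates by the Lipschitz continuity of `∇f`. -/

lemma abs_sub_sub_inner_le_of_lipschitz_gradient {F : Type*} [NormedAddCommGroup F]
    [InnerProductSpace ℝ F] [CompleteSpace F] {f : F → ℝ} {f' : F → F} {L : ℝ}
    (hf : ∀ u, HasGradientAt f (f' u) u) (hlip : ∀ u v, ‖f' u - f' v‖ ≤ L * ‖u - v‖)
    (x z : F) :
    |f z - f x - ⟪f' x, z - x⟫| ≤ L / 2 * ‖z - x‖ ^ 2 := by
  set v := z - x
  have hline (t : ℝ) : HasDerivAt (fun s : ℝ => x + s • v) v t := by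
    simpa using ((hasDerivAt_id t).smul_const v).const_add x
  have hderiv (t : ℝ) : HasDerivAt (fun s : ℝ => f (x + s • v) - f x - s * ⟪f' x, v⟫)
      ⟪f' (x + t • v) - f' x, v⟫ t := by
    have hcomp := (hf (x + t • v)).hasFDerivAt.comp_hasDerivAt t (hline t)
    simp only [Function.comp_def, InnerProductSpace.toDual_apply_apply] at hcomp
    rw [inner_sub_left]
    exact (hcomp.sub_const (f x)).sub (hasDerivAt_mul_const _)
  have hbound (t : ℝ) (ht : t ∈ Ico (0 : ℝ) 1) :
      ‖⟪f' (x + t • v) - f' x, v⟫‖ ≤ L * t * ‖v‖ ^ 2 :=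
    calc ‖⟪f' (x + t • v) - f' x, v⟫‖ ≤ ‖f' (x + t • v) - f' x‖ * ‖v‖ := norm_inner_le_norm _ _
      _ ≤ L * ‖x + t • v - x‖ * ‖v‖ := by gcongr; exact hlip _ _
      _ = L * t * ‖v‖ ^ 2 := by
        rw [add_sub_cancel_left, norm_smul, Real.norm_of_nonneg ht.1]; ring
  have hB (t : ℝ) : HasDerivAt (fun s : ℝ => L / 2 * s ^ 2 * ‖v‖ ^ 2) (L * t * ‖v‖ ^ 2) t := by
    refine (((hasDerivAt_pow 2 t).const_mul (L / 2)).mul_const (‖v‖ ^ 2)).congr_deriv ?_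
    push_cast; ring
  have hfence := image_norm_le_of_norm_deriv_right_le_deriv_boundary
    (fun t _ => (hderiv t).continuousAt.continuousWithinAt)
    (fun t _ => (hderiv t).hasDerivWithinAt) (by simp) hB hbound (right_mem_Icc.2 zero_le_one)
  simpa [v] using hfence

lemma abs_Fsum_sub_sub_inner_le {f : ∀ i, E i → ℝ} {f' : ∀ i, E i → E i} {L : Fin N → ℝ}
    (hf : ∀ i (u : E i), HasGradientAt (f i) (f' i u) u)
    (hlip : ∀ i (u v : E i), ‖f' i u - f' i v‖ ≤ L i * ‖u - v‖) (x z : PiLp 2 E) :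
    |Fsum f z - Fsum f x - (N : ℝ)⁻¹ * ∑ i, ⟪f' i (x i), z i - x i⟫|
      ≤ 2⁻¹ * ∑ i, L i / N * ‖z i - x i‖ ^ 2 := by
  have hsplit : Fsum f z - Fsum f x - (N : ℝ)⁻¹ * ∑ i, ⟪f' i (x i), z i - x i⟫
      = (N : ℝ)⁻¹ * ∑ i, (f i (z i) - f i (x i) - ⟪f' i (x i), z i - x i⟫) := by
    simp only [Fsum, Finset.sum_sub_distrib]; ring
  calc |Fsum f z - Fsum f x - (N : ℝ)⁻¹ * ∑ i, ⟪f' i (x i), z i - x i⟫|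
      ≤ (N : ℝ)⁻¹ * ∑ i, L i / 2 * ‖z i - x i‖ ^ 2 := by
        rw [hsplit, abs_mul, abs_of_nonneg (by positivity)]
        gcongr
        refine (Finset.abs_sum_le_sum_abs _ _).trans (Finset.sum_le_sum fun i _ => ?_)
        exact abs_sub_sub_inner_le_of_lipschitz_gradient (hf i) (hlip i) _ _
    _ = 2⁻¹ * ∑ i, L i / N * ‖z i - x i‖ ^ 2 := by
        simp only [Finset.mul_sum]; exact Finset.sum_congr rfl fun i _ => by ring

theorem fbe_sandwich_inequalities_general
    (f : ∀ i, E i → ℝ) (f' : ∀ i, E i → E i) (L γ : Fin N → ℝ)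
    (G : PiLp 2 E → EReal)
    (hf : ∀ i (u : E i), HasGradientAt (f i) (f' i u) u)
    (hlip : ∀ i (u v : E i), ‖f' i u - f' i v‖ ≤ L i * ‖u - v‖)
    (φ : PiLp 2 E → ℝ)
    (hφ : ∀ x, ((φ x : ℝ) : EReal) = ⨅ w, Mdl f f' γ G w x)
    :
    ∀ x : PiLp 2 E, ∀ z ∈ Tmap f f' γ G x,
      Phi f G z + ((2⁻¹ * ∑ i, ((γ i)⁻¹ - L i / (N : ℝ)) * ‖z i - x i‖ ^ 2 : ℝ) : EReal)
          ≤ ((φ x : ℝ) : EReal) ∧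
      ((φ x : ℝ) : EReal)
          ≤ Phi f G z + ((2⁻¹ * ∑ i, ((γ i)⁻¹ + L i / (N : ℝ)) * ‖z i - x i‖ ^ 2 : ℝ) : EReal) := by
  intro x z hz
  have hφz : (φ x : EReal) = Phi f G z + ((Fsum f x + (N : ℝ)⁻¹ * ∑ i, ⟪f' i (x i), z i - x i⟫
      - Fsum f z + 2⁻¹ * ∑ i, (γ i)⁻¹ * ‖z i - x i‖ ^ 2 : ℝ) : EReal) := by
    rw [hφ, le_antisymm (iInf_le _ z) (le_iInf fun w => hz w), Mdl, Phi,
      add_right_comm (Fsum f z : EReal), ← EReal.coe_add]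
    congr 2
    ring
  obtain ⟨hlo, hhi⟩ := abs_le.mp (abs_Fsum_sub_sub_inner_le hf hlip x z)
  rw [hφz]
  constructor <;> gcongr
  · simp only [sub_mul, Finset.sum_sub_distrib]
    linarith
  · simp only [add_mul, Finset.sum_add_distrib]
    linarith

/-- Lemma 2.3(ii): for every x and every z ∈ T(x),
½‖z-x‖²_{Γ⁻¹-Λ_F} ≤ φ_Γ(x) - Φ(z) ≤ ½‖z-x‖²_{Γ⁻¹+Λ_F}, with Λ_F = (1/N)blockdiag(L_{f_i}I). -/
theorem fbe_sandwich_inequalities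
    (f : ∀ i, E i → ℝ) (f' : ∀ i, E i → E i) (L γ : Fin N → ℝ)
    (G : PiLp 2 E → EReal)
    (hf : ∀ i (u : E i), HasGradientAt (f i) (f' i u) u)
    (hL : ∀ i, 0 ≤ L i)
    (hlip : ∀ i (u v : E i), ‖f' i u - f' i v‖ ≤ L i * ‖u - v‖)
    (hγ : ∀ i, 0 < γ i) (hγL : ∀ i, γ i * L i < (N : ℝ))
    (hGlsc : LowerSemicontinuous G)
    (hGproper : ∃ w, G w ≠ ⊤) (hGbot : ∀ w, G w ≠ ⊥)
    (hargmin : ∃ xs : PiLp 2 E, ∀ w, Phi f G xs ≤ Phi f G w)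
    (φ : PiLp 2 E → ℝ)
    (hφ : ∀ x, ((φ x : ℝ) : EReal) = ⨅ w, Mdl f f' γ G w x)
    :
    ∀ x : PiLp 2 E, ∀ z ∈ Tmap f f' γ G x,
      Phi f G z + ((2⁻¹ * ∑ i, ((γ i)⁻¹ - L i / (N : ℝ)) * ‖z i - x i‖ ^ 2 : ℝ) : EReal)
          ≤ ((φ x : ℝ) : EReal) ∧
      ((φ x : ℝ) : EReal)
          ≤ Phi f G z + ((2⁻¹ * ∑ i, ((γ i)⁻¹ + L i / (N : ℝ)) * ‖z i - x i‖ ^ 2 : ℝ) : EReal) :=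
  fbe_sandwich_inequalities_general f f' L γ G hf hlip φ hφ
end
end

section
/- Along the iterates of the block-coordinate forward-backward algorithm with arbitrary index selection: (i) the sequence (φ_Γ(x^k)) monotonically decreases to a finite value Φ* ≥ min Φ; (ii) φ_Γ is constant and equal to Φ* on the set of accumulation points of (x^k); (iii) the sequence (‖x^{k+1} − x^k‖²) is summable, and in particular ‖x^{k+1} − x^k‖ → 0. -/
open Filter Topology Metric Bornology Set
open scoped RealInnerProductSpace

/-
The model `Mdl w x` majorizes `Φ w` with margin `(δ/2)‖w - x‖²` (descent lemma and `γᵢ Lᵢ < N`),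
and its smooth part is block-separable.  For `z ∈ T(x)` the FBE satisfies `φ y ≤ Mdl z y` with
equality at `y = x`, so a block update `x⁺` of `x` towards `z` gives
`φ(x⁺) ≤ Mdl z x⁺ ≤ Mdl z x - (δ/2)‖x⁺ - x‖² = φ x - (δ/2)‖x⁺ - x‖²`.  As `φ ≥ min Φ`, the values
`φ(xᵏ)` decrease to a finite limit `Φ*` and the squared steps are summable.  At a cluster point
`p`, upper semicontinuity of `φ` (an infimum of continuous functions) gives `Φ* ≤ φ p`, while
`φ p ≤ Mdl zᵏ p = φ(xᵏ) + (Mdl zᵏ p - Mdl zᵏ xᵏ)` and the bracket tends to `0` along the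
subsequence because `‖zᵏ - xᵏ‖` stays bounded.
-/

theorem EReal.continuous_coe_comp_add_const {X : Type*} [TopologicalSpace X] {g : X → ℝ}
    (hg : Continuous g) (c : EReal) : Continuous fun y => (g y : EReal) + c :=
  continuous_iff_continuousAt.2 fun _ =>
    (EReal.continuousAt_add (Or.inl (EReal.coe_ne_top _)) (Or.inl (EReal.coe_ne_bot _))).comp
      ((continuous_coe_real_ereal.comp hg).prodMk continuous_const).continuousAt

theorem EReal.eq_coe_sub_of_coe_eq_coe_add {a b : ℝ} {g : EReal} (h : (b : EReal) = a + g) :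
    g = ((b - a : ℝ) : EReal) := by
  induction g with
  | bot => simp at h
  | top => simp at h
  | coe r => norm_cast at h ⊢; linarith

theorem summable_of_add_mul_le {a d : ℕ → ℝ} {c m : ℝ} (hc : 0 < c) (hd : ∀ k, 0 ≤ d k)
    (hdec : ∀ k, a (k + 1) + c * d k ≤ a k) (hm : ∀ k, m ≤ a k) : Summable d := by
  refine summable_of_sum_range_le hd (c := (a 0 - m) / c) fun n => ?_
  have htel : c * ∑ k ∈ Finset.range n, d k ≤ a 0 - a n := by
    rw [Finset.mul_sum, ← Finset.sum_range_sub' a n]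
    exact Finset.sum_le_sum fun k _ => by linarith [hdec k]
  rw [le_div_iff₀ hc]
  linarith [hm n]

section LinearizedModel

variable {X : Type*} [NormedAddCommGroup X] [InnerProductSpace ℝ X]

/-- One block of the smooth part of `Mdl`: `a` is a block of `w`, `b` the same block of `x`,
and `c = 1/N`. -/
noncomputable def linearizedModel (c γ : ℝ) (f : X → ℝ) (f' : X → X) (a b : X) : ℝ :=
  c * f b + c * ⟪f' b, a - b⟫ + 2⁻¹ * (γ⁻¹ * ‖a - b‖ ^ 2)

variable {c γ L : ℝ} {f : X → ℝ} {f' : X → X}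

@[simp]
theorem linearizedModel_self (a : X) : linearizedModel c γ f f' a a = c * f a := by
  simp [linearizedModel]

variable [CompleteSpace X]

structure HasLipschitzGradient (f : X → ℝ) (f' : X → X) (L : ℝ) : Prop where
  hasGradientAt : ∀ u, HasGradientAt f (f' u) u
  norm_sub_le : ∀ u v, ‖f' u - f' v‖ ≤ L * ‖u - v‖

namespace HasLipschitzGradient

theorem continuous (hf : HasLipschitzGradient f f' L) : Continuous f :=
  Differentiable.continuous fun u => (hf.hasGradientAt u).differentiableAt

theorem continuous_gradient (hf : HasLipschitzGradient f f' L) : Continuous f' :=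
  (LipschitzWith.of_dist_le' fun u v => by
    simpa only [dist_eq_norm] using hf.norm_sub_le u v).continuous

theorem abs_sub_sub_inner_le (hf : HasLipschitzGradient f f' L) (u v : X) :
    |f v - f u - ⟪f' u, v - u⟫| ≤ L / 2 * ‖v - u‖ ^ 2 := by
  set d := v - u
  have hderiv (t : ℝ) : HasDerivAt (fun t : ℝ => f (u + t • d) - f u - t * ⟪f' u, d⟫)
      ⟪f' (u + t • d) - f' u, d⟫ t := by
    have hline : HasDerivAt (fun t : ℝ => u + t • d) d t := by
      simpa using ((hasDerivAt_id t).smul_const d).const_add u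
    have := ((hf.hasGradientAt (u + t • d)).hasFDerivAt.comp_hasDerivAt t hline).sub_const (f u)
      |>.fun_sub ((hasDerivAt_id t).mul_const ⟪f' u, d⟫)
    simpa [inner_sub_left] using this
  have hbound : ∀ t ∈ Ico (0 : ℝ) 1, ‖⟪f' (u + t • d) - f' u, d⟫‖ ≤ L * ‖d‖ ^ 2 * t := by
    intro t ht
    calc ‖⟪f' (u + t • d) - f' u, d⟫‖ ≤ ‖f' (u + t • d) - f' u‖ * ‖d‖ := norm_inner_le_norm _ _
      _ ≤ L * ‖t • d‖ * ‖d‖ := by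
          gcongr
          simpa using hf.norm_sub_le (u + t • d) u
      _ = L * ‖d‖ ^ 2 * t := by rw [norm_smul, Real.norm_of_nonneg ht.1]; ring
  have hB (t : ℝ) : HasDerivAt (fun t : ℝ => L / 2 * ‖d‖ ^ 2 * t ^ 2) (L * ‖d‖ ^ 2 * t) t :=
    ((hasDerivAt_pow 2 t).const_mul (L / 2 * ‖d‖ ^ 2)).congr_deriv (by push_cast; ring)
  have := image_norm_le_of_norm_deriv_right_le_deriv_boundary
    (fun t _ => (hderiv t).continuousAt.continuousWithinAt)
    (fun t _ => (hderiv t).hasDerivWithinAt) (by simp) hB hbound (right_mem_Icc.2 zero_le_one)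
  simpa [d] using this

theorem mul_add_le_linearizedModel (hf : HasLipschitzGradient f f' L) (hc : 0 ≤ c) (a b : X) :
    c * f a + 2⁻¹ * (γ⁻¹ - c * L) * ‖a - b‖ ^ 2 ≤ linearizedModel c γ f f' a b := by
  have hdesc := mul_le_mul_of_nonneg_left (abs_le.1 (hf.abs_sub_sub_inner_le b a)).2 hc
  unfold linearizedModel
  linarith

theorem continuous_linearizedModel (hf : HasLipschitzGradient f f' L) (a : X) :
    Continuous (linearizedModel c γ f f' a) := by
  have := hf.continuous
  have := hf.continuous_gradient
  unfold linearizedModel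
  fun_prop

theorem abs_linearizedModel_sub_le (hf : HasLipschitzGradient f f' L) (hc : 0 ≤ c) (hγ : 0 ≤ γ)
    (a b p : X) :
    |linearizedModel c γ f f' a p - linearizedModel c γ f f' a b|
      ≤ (c * L + γ⁻¹) * ‖b - p‖ * (‖b - p‖ / 2 + ‖a - b‖) := by
  set d := a - b
  set e := b - p
  -- `a - p = d + e`: a Taylor remainder, a gradient increment and a difference of squares
  have hsplit : linearizedModel c γ f f' a p - linearizedModel c γ f f' a b
      = -c * (f b - f p - ⟪f' p, e⟫) + c * ⟪f' p - f' b, d⟫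
        + 2⁻¹ * γ⁻¹ * (2 * ⟪d, e⟫ + ‖e‖ ^ 2) := by
    have hap : a - p = d + e := by simp [d, e]
    simp only [linearizedModel]
    rw [hap, show a - b = d from rfl]
    simp only [← real_inner_self_eq_norm_sq, inner_add_left, inner_add_right, inner_sub_left,
      real_inner_comm d e]
    ring
  have hrem := hf.abs_sub_sub_inner_le p b
  have hgrad : |⟪f' p - f' b, d⟫| ≤ L * ‖e‖ * ‖d‖ :=
    (abs_real_inner_le_norm _ _).trans (mul_le_mul_of_nonneg_right
      (by simpa [e, norm_sub_rev] using hf.norm_sub_le p b) (norm_nonneg d))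
  have hsq : |2 * ⟪d, e⟫ + ‖e‖ ^ 2| ≤ 2 * ‖d‖ * ‖e‖ + ‖e‖ ^ 2 := by
    have := abs_real_inner_le_norm d e
    rw [abs_le] at this ⊢
    constructor <;> nlinarith
  rw [hsplit]
  calc _ ≤ c * |f b - f p - ⟪f' p, e⟫| + c * |⟪f' p - f' b, d⟫|
        + 2⁻¹ * γ⁻¹ * |2 * ⟪d, e⟫ + ‖e‖ ^ 2| := by
        refine (abs_add_le _ _).trans (add_le_add ((abs_add_le _ _).trans_eq ?_) ?_) <;>
          simp [abs_mul, abs_of_nonneg hc, abs_of_nonneg hγ]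
    _ ≤ c * (L / 2 * ‖e‖ ^ 2) + c * (L * ‖e‖ * ‖d‖)
        + 2⁻¹ * γ⁻¹ * (2 * ‖d‖ * ‖e‖ + ‖e‖ ^ 2) := by
        gcongr
    _ = (c * L + γ⁻¹) * ‖e‖ * (‖e‖ / 2 + ‖d‖) := by ring

end HasLipschitzGradient

end LinearizedModel

variable {N : ℕ} {E : Fin N → Type*}
  [∀ i, NormedAddCommGroup (E i)] [∀ i, InnerProductSpace ℝ (E i)]

noncomputable def smoothMdl (f : ∀ i, E i → ℝ) (f' : ∀ i, E i → E i) (γ : Fin N → ℝ)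
    (w x : PiLp 2 E) : ℝ :=
  ∑ i, linearizedModel (N : ℝ)⁻¹ (γ i) (f i) (f' i) (w i) (x i)

variable {f : ∀ i, E i → ℝ} {f' : ∀ i, E i → E i} {L γ : Fin N → ℝ} {G : PiLp 2 E → EReal}
  {φ : PiLp 2 E → ℝ} {δ : ℝ} {x z : PiLp 2 E}

theorem Mdl_eq_smoothMdl_add (w y : PiLp 2 E) :
    Mdl f f' γ G w y = (smoothMdl f f' γ w y : EReal) + G w := by
  rw [Mdl, smoothMdl, EReal.coe_eq_coe_iff.2]
  simp only [linearizedModel, Fsum, Finset.sum_add_distrib, Finset.mul_sum]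

theorem coe_fbe_eq_Mdl (hφ : ∀ x, (φ x : EReal) = ⨅ w, Mdl f f' γ G w x)
    (hz : z ∈ Tmap f f' γ G x) : (φ x : EReal) = Mdl f f' γ G z x :=
  (hφ x).trans (le_antisymm (iInf_le _ z) (le_iInf hz))

theorem fbe_sub_smoothMdl_le (hφ : ∀ x, (φ x : EReal) = ⨅ w, Mdl f f' γ G w x)
    (hz : z ∈ Tmap f f' γ G x) (y : PiLp 2 E) :
    φ y - smoothMdl f f' γ z y ≤ φ x - smoothMdl f f' γ z x := by
  have hy : (φ y : EReal) ≤ Mdl f f' γ G z y := (hφ y).trans_le (iInf_le _ z)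
  have hx := coe_fbe_eq_Mdl hφ hz
  rw [Mdl_eq_smoothMdl_add] at hx hy
  rw [EReal.eq_coe_sub_of_coe_eq_coe_add hx, ← EReal.coe_add, EReal.coe_le_coe_iff] at hy
  linarith

theorem exists_pos_le_inv_sub_mul (hγ : ∀ i, 0 < γ i) (hγL : ∀ i, γ i * L i < N) :
    ∃ δ > 0, ∀ i, δ ≤ (γ i)⁻¹ - (N : ℝ)⁻¹ * L i := by
  have hgap (i : Fin N) : 0 < (γ i)⁻¹ - (N : ℝ)⁻¹ * L i := by
    have hN : (0 : ℝ) < N := by exact_mod_cast i.pos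
    have := (hγ i).ne'
    rw [show (γ i)⁻¹ - (N : ℝ)⁻¹ * L i = (N - γ i * L i) / (γ i * N) by field_simp]
    exact div_pos (sub_pos.2 (hγL i)) (mul_pos (hγ i) hN)
  obtain ⟨δ, hδ, hδpos⟩ := ((eventually_all.2 fun i =>
    ((gt_mem_nhds (hgap i)).filter_mono nhdsWithin_le_nhds).mono fun _ => le_of_lt).and
    (self_mem_nhdsWithin (s := Ioi (0 : ℝ)))).exists
  exact ⟨δ, hδpos, hδ⟩

variable [∀ i, CompleteSpace (E i)]

theorem continuous_Mdl (hF : ∀ i, HasLipschitzGradient (f i) (f' i) (L i)) (w : PiLp 2 E) :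
    Continuous (Mdl f f' γ G w) := by
  have hsmooth : Continuous (smoothMdl f f' γ w) := continuous_finsetSum _ fun i _ =>
    ((hF i).continuous_linearizedModel (w i)).comp (PiLp.continuous_apply 2 E i)
  rw [show Mdl f f' γ G w = _ from funext (Mdl_eq_smoothMdl_add w)]
  exact EReal.continuous_coe_comp_add_const hsmooth (G w)

theorem Fsum_add_le_smoothMdl (hF : ∀ i, HasLipschitzGradient (f i) (f' i) (L i))
    (hδ : ∀ i, δ ≤ (γ i)⁻¹ - (N : ℝ)⁻¹ * L i) (w y : PiLp 2 E) :
    Fsum f w + δ / 2 * ‖w - y‖ ^ 2 ≤ smoothMdl f f' γ w y := by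
  rw [PiLp.norm_sq_eq_of_L2, Fsum, smoothMdl, Finset.mul_sum, Finset.mul_sum,
    ← Finset.sum_add_distrib]
  refine Finset.sum_le_sum fun i _ => ?_
  have hmodel := (hF i).mul_add_le_linearizedModel (γ := γ i) (inv_nonneg.2 N.cast_nonneg)
    (w i) (y i)
  have hmargin : δ / 2 * ‖w i - y i‖ ^ 2
      ≤ 2⁻¹ * ((γ i)⁻¹ - (N : ℝ)⁻¹ * L i) * ‖w i - y i‖ ^ 2 := by
    gcongr
    linarith [hδ i]
  rw [PiLp.sub_apply]
  linarith

theorem smoothMdl_add_le_of_update (hF : ∀ i, HasLipschitzGradient (f i) (f' i) (L i))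
    (hδ : ∀ i, δ ≤ (γ i)⁻¹ - (N : ℝ)⁻¹ * L i) {I : Finset (Fin N)} {x' : PiLp 2 E}
    (hx' : ∀ i, x' i = if i ∈ I then z i else x i) :
    smoothMdl f f' γ z x' + δ / 2 * ‖x' - x‖ ^ 2 ≤ smoothMdl f f' γ z x := by
  rw [PiLp.norm_sq_eq_of_L2, smoothMdl, smoothMdl, Finset.mul_sum, ← Finset.sum_add_distrib]
  refine Finset.sum_le_sum fun i _ => ?_
  rw [PiLp.sub_apply, hx' i]
  split_ifs
  · have hmodel := (hF i).mul_add_le_linearizedModel (γ := γ i) (inv_nonneg.2 N.cast_nonneg)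
      (z i) (x i)
    have hmargin : δ / 2 * ‖z i - x i‖ ^ 2
        ≤ 2⁻¹ * ((γ i)⁻¹ - (N : ℝ)⁻¹ * L i) * ‖z i - x i‖ ^ 2 := by
      gcongr
      linarith [hδ i]
    rw [linearizedModel_self]
    linarith
  · simp

theorem Phi_le_Mdl (hF : ∀ i, HasLipschitzGradient (f i) (f' i) (L i))
    (hgap : ∀ i, 0 ≤ (γ i)⁻¹ - (N : ℝ)⁻¹ * L i) (w y : PiLp 2 E) :
    Phi f G w ≤ Mdl f f' γ G w y := by
  have := Fsum_add_le_smoothMdl hF hgap w y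
  rw [Mdl_eq_smoothMdl_add, Phi]
  gcongr
  linarith

theorem Phi_le_fbe (hF : ∀ i, HasLipschitzGradient (f i) (f' i) (L i))
    (hgap : ∀ i, 0 ≤ (γ i)⁻¹ - (N : ℝ)⁻¹ * L i)
    (hφ : ∀ x, (φ x : EReal) = ⨅ w, Mdl f f' γ G w x) {xs : PiLp 2 E}
    (hxs : ∀ w, Phi f G xs ≤ Phi f G w) (y : PiLp 2 E) : Phi f G xs ≤ φ y := by
  rw [hφ]
  exact le_iInf fun w => (hxs w).trans (Phi_le_Mdl hF hgap w y)

theorem exists_Phi_eq_coe (hF : ∀ i, HasLipschitzGradient (f i) (f' i) (L i))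
    (hgap : ∀ i, 0 ≤ (γ i)⁻¹ - (N : ℝ)⁻¹ * L i)
    (hφ : ∀ x, (φ x : EReal) = ⨅ w, Mdl f f' γ G w x) (hGbot : ∀ w, G w ≠ ⊥) {xs : PiLp 2 E}
    (hxs : ∀ w, Phi f G xs ≤ Phi f G w) : ∃ m : ℝ, Phi f G xs = m :=
  ⟨_, (EReal.coe_toReal (ne_top_of_le_ne_top (EReal.coe_ne_top _) (Phi_le_fbe hF hgap hφ hxs xs))
    (EReal.add_ne_bot_iff.2 ⟨EReal.coe_ne_bot _, hGbot xs⟩)).symm⟩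

theorem Phi_add_le_fbe (hF : ∀ i, HasLipschitzGradient (f i) (f' i) (L i))
    (hδ : ∀ i, δ ≤ (γ i)⁻¹ - (N : ℝ)⁻¹ * L i)
    (hφ : ∀ x, (φ x : EReal) = ⨅ w, Mdl f f' γ G w x) (hz : z ∈ Tmap f f' γ G x) :
    Phi f G z + ((δ / 2 * ‖z - x‖ ^ 2 : ℝ) : EReal) ≤ φ x := by
  rw [coe_fbe_eq_Mdl hφ hz, Mdl_eq_smoothMdl_add, Phi, add_right_comm, ← EReal.coe_add]
  gcongr
  exact Fsum_add_le_smoothMdl hF hδ z x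

theorem add_sq_norm_le_fbe (hF : ∀ i, HasLipschitzGradient (f i) (f' i) (L i))
    (hδ : ∀ i, δ ≤ (γ i)⁻¹ - (N : ℝ)⁻¹ * L i)
    (hφ : ∀ x, (φ x : EReal) = ⨅ w, Mdl f f' γ G w x) {xs : PiLp 2 E} {m : ℝ}
    (hxs : ∀ w, Phi f G xs ≤ Phi f G w) (hm : Phi f G xs = m) (hz : z ∈ Tmap f f' γ G x) :
    m + δ / 2 * ‖z - x‖ ^ 2 ≤ φ x := by
  have := (add_le_add (hxs z) le_rfl).trans (Phi_add_le_fbe hF hδ hφ hz)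
  rwa [hm, ← EReal.coe_add, EReal.coe_le_coe_iff] at this

theorem fbe_add_le_of_update (hF : ∀ i, HasLipschitzGradient (f i) (f' i) (L i))
    (hδ : ∀ i, δ ≤ (γ i)⁻¹ - (N : ℝ)⁻¹ * L i)
    (hφ : ∀ x, (φ x : EReal) = ⨅ w, Mdl f f' γ G w x) (hz : z ∈ Tmap f f' γ G x)
    {I : Finset (Fin N)} {x' : PiLp 2 E} (hx' : ∀ i, x' i = if i ∈ I then z i else x i) :
    φ x' + δ / 2 * ‖x' - x‖ ^ 2 ≤ φ x := by
  linarith [fbe_sub_smoothMdl_le hφ hz x', smoothMdl_add_le_of_update hF hδ hx']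

theorem abs_smoothMdl_sub_le (hF : ∀ i, HasLipschitzGradient (f i) (f' i) (L i))
    (hL : ∀ i, 0 ≤ L i) (hγ : ∀ i, 0 < γ i) (w y p : PiLp 2 E) :
    |smoothMdl f f' γ w p - smoothMdl f f' γ w y|
      ≤ (∑ i, ((N : ℝ)⁻¹ * L i + (γ i)⁻¹)) * ‖y - p‖ * (‖y - p‖ / 2 + ‖w - y‖) := by
  rw [smoothMdl, smoothMdl, ← Finset.sum_sub_distrib, Finset.sum_mul, Finset.sum_mul]
  refine (Finset.abs_sum_le_sum_abs _ _).trans (Finset.sum_le_sum fun i _ => ?_)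
  refine ((hF i).abs_linearizedModel_sub_le (inv_nonneg.2 N.cast_nonneg) (hγ i).le _ _ _).trans ?_
  have hyp := PiLp.norm_apply_le (y - p) i
  have hwy := PiLp.norm_apply_le (w - y) i
  rw [PiLp.sub_apply] at hyp hwy
  have := hL i
  have := hγ i
  gcongr

theorem tendsto_smoothMdl_sub (hF : ∀ i, HasLipschitzGradient (f i) (f' i) (L i))
    (hL : ∀ i, 0 ≤ L i) (hγ : ∀ i, 0 < γ i) {u v : ℕ → PiLp 2 E} {p : PiLp 2 E} {B : ℝ}
    (hu : Tendsto u atTop (𝓝 p)) (hB : ∀ j, ‖v j - u j‖ ≤ B) :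
    Tendsto (fun j => smoothMdl f f' γ (v j) p - smoothMdl f f' γ (v j) (u j)) atTop (𝓝 0) := by
  set C := ∑ i, ((N : ℝ)⁻¹ * L i + (γ i)⁻¹)
  have hC : 0 ≤ C := Finset.sum_nonneg fun i _ => by have := hL i; have := hγ i; positivity
  have hdist : Tendsto (fun j => ‖u j - p‖) atTop (𝓝 0) := tendsto_iff_norm_sub_tendsto_zero.1 hu
  refine squeeze_zero_norm (fun j => (abs_smoothMdl_sub_le hF hL hγ _ _ _).trans ?_)
    (by simpa using (hdist.const_mul C).mul ((hdist.div_const 2).add_const B))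
  gcongr
  exact hB j

theorem le_fbe_of_tendsto (hF : ∀ i, HasLipschitzGradient (f i) (f' i) (L i))
    (hφ : ∀ x, (φ x : EReal) = ⨅ w, Mdl f f' γ G w x) {u : ℕ → PiLp 2 E} {p : PiLp 2 E} {l : ℝ}
    (hu : Tendsto u atTop (𝓝 p)) (hl : Tendsto (fun j => φ (u j)) atTop (𝓝 l)) : l ≤ φ p := by
  have : (l : EReal) ≤ φ p := by
    rw [hφ]
    exact le_iInf fun w => le_of_tendsto_of_tendsto'
      ((continuous_coe_real_ereal.tendsto l).comp hl) (((continuous_Mdl hF w).tendsto p).comp hu)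
      fun j => (hφ (u j)).trans_le (iInf_le _ w)
  exact_mod_cast this

theorem fbe_le_of_tendsto (hF : ∀ i, HasLipschitzGradient (f i) (f' i) (L i))
    (hL : ∀ i, 0 ≤ L i) (hγ : ∀ i, 0 < γ i) (hφ : ∀ x, (φ x : EReal) = ⨅ w, Mdl f f' γ G w x)
    {u v : ℕ → PiLp 2 E} {p : PiLp 2 E} {l B : ℝ} (hu : Tendsto u atTop (𝓝 p))
    (hl : Tendsto (fun j => φ (u j)) atTop (𝓝 l)) (hv : ∀ j, v j ∈ Tmap f f' γ G (u j))
    (hB : ∀ j, ‖v j - u j‖ ≤ B) : φ p ≤ l := by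
  have hlim : Tendsto
      (fun j => φ (u j) + (smoothMdl f f' γ (v j) p - smoothMdl f f' γ (v j) (u j))) atTop (𝓝 l) :=
    by simpa using hl.add (tendsto_smoothMdl_sub hF hL hγ hu hB)
  exact ge_of_tendsto hlim (Eventually.of_forall fun j => by
    linarith [fbe_sub_smoothMdl_le hφ (hv j) p])

theorem bc_fbe_decreases_cluster_constant_summable_general
    (f : ∀ i, E i → ℝ) (f' : ∀ i, E i → E i) (L γ : Fin N → ℝ)
    (G : PiLp 2 E → EReal)
    (hf : ∀ i (u : E i), HasGradientAt (f i) (f' i u) u)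
    (hL : ∀ i, 0 ≤ L i)
    (hlip : ∀ i (u v : E i), ‖f' i u - f' i v‖ ≤ L i * ‖u - v‖)
    (hγ : ∀ i, 0 < γ i) (hγL : ∀ i, γ i * L i < (N : ℝ))
    (hGbot : ∀ w, G w ≠ ⊥)
    (hargmin : ∃ xs : PiLp 2 E, ∀ w, Phi f G xs ≤ Phi f G w)
    (φ : PiLp 2 E → ℝ)
    (hφ : ∀ x, ((φ x : ℝ) : EReal) = ⨅ w, Mdl f f' γ G w x)
    (x z : ℕ → PiLp 2 E) (I : ℕ → Finset (Fin N))
    (hz : ∀ k, z k ∈ Tmap f f' γ G (x k))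
    (hup : ∀ (k : ℕ) (i : Fin N), x (k + 1) i = if i ∈ I (k + 1) then z k i else x k i)
    :
    ∃ Φstar : ℝ,
      (∀ k, φ (x (k + 1)) ≤ φ (x k)) ∧
      Tendsto (fun k => φ (x k)) atTop (𝓝 Φstar) ∧
      (∀ xs : PiLp 2 E, (∀ w, Phi f G xs ≤ Phi f G w) → Phi f G xs ≤ ((Φstar : ℝ) : EReal)) ∧
      (∀ p : PiLp 2 E, MapClusterPt p atTop x → φ p = Φstar) ∧
      Summable (fun k => ‖x (k + 1) - x k‖ ^ 2) ∧
      Tendsto (fun k => ‖x (k + 1) - x k‖) atTop (𝓝 0) := by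
  have hF (i : Fin N) : HasLipschitzGradient (f i) (f' i) (L i) := ⟨hf i, hlip i⟩
  obtain ⟨δ, hδpos, hδ⟩ := exists_pos_le_inv_sub_mul hγ hγL
  have hgap (i : Fin N) : 0 ≤ (γ i)⁻¹ - (N : ℝ)⁻¹ * L i := hδpos.le.trans (hδ i)
  obtain ⟨xs, hxs⟩ := hargmin
  obtain ⟨m, hm⟩ := exists_Phi_eq_coe hF hgap hφ hGbot hxs
  have hlow (k : ℕ) := add_sq_norm_le_fbe hF hδ hφ hxs hm (hz k)
  have hdesc (k : ℕ) := fbe_add_le_of_update hF hδ hφ (hz k) (hup k)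
  have hmono (k : ℕ) : φ (x (k + 1)) ≤ φ (x k) := by
    linarith [hdesc k, mul_nonneg (half_pos hδpos).le (sq_nonneg ‖x (k + 1) - x k‖)]
  have hanti : Antitone fun k => φ (x k) := antitone_nat_of_succ_le hmono
  have hbdd (k : ℕ) : m ≤ φ (x k) := by
    linarith [hlow k, mul_nonneg (half_pos hδpos).le (sq_nonneg ‖z k - x k‖)]
  have htend := tendsto_atTop_ciInf hanti ⟨m, forall_mem_range.2 hbdd⟩
  have hsum := summable_of_add_mul_le (half_pos hδpos) (fun _ => sq_nonneg _) hdesc hbdd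
  refine ⟨_, hmono, htend, fun xs' hxs' => ?_, fun p hp => ?_, hsum,
    by simpa using hsum.tendsto_atTop_zero.sqrt⟩
  · exact ge_of_tendsto ((continuous_coe_real_ereal.tendsto _).comp htend)
      (Eventually.of_forall fun k => Phi_le_fbe hF hgap hφ hxs' (x k))
  · obtain ⟨ψ, hψ, hxψ⟩ := hp.tendsto_subseq
    have hφψ := htend.comp hψ.tendsto_atTop
    have hB (j : ℕ) : ‖z (ψ j) - x (ψ j)‖ ≤ √((φ (x 0) - m) / (δ / 2)) := by
      rw [Real.le_sqrt (norm_nonneg _) (div_nonneg (by linarith [hbdd 0]) (half_pos hδpos).le),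
        le_div_iff₀ (half_pos hδpos)]
      linarith [hlow (ψ j), hanti (Nat.zero_le (ψ j))]
    exact le_antisymm (fbe_le_of_tendsto hF hL hγ hφ hxψ hφψ (fun j => hz (ψ j)) hB)
      (le_fbe_of_tendsto hF hφ hxψ hφψ)

/-- Lemma 3.2(ii)-(iv): along BC iterates with arbitrary index selection,
(φ_Γ(x^k)) decreases monotonically to a finite value Φ* ≥ min Φ, φ_Γ ≡ Φ* on the set of
accumulation points of (x^k), and (‖x^{k+1}-x^k‖²) is summable (hence vanishes). -/
theorem bc_fbe_decreases_cluster_constant_summable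
    (f : ∀ i, E i → ℝ) (f' : ∀ i, E i → E i) (L γ : Fin N → ℝ)
    (G : PiLp 2 E → EReal)
    (hf : ∀ i (u : E i), HasGradientAt (f i) (f' i u) u)
    (hL : ∀ i, 0 ≤ L i)
    (hlip : ∀ i (u v : E i), ‖f' i u - f' i v‖ ≤ L i * ‖u - v‖)
    (hγ : ∀ i, 0 < γ i) (hγL : ∀ i, γ i * L i < (N : ℝ))
    (hGlsc : LowerSemicontinuous G)
    (hGproper : ∃ w, G w ≠ ⊤) (hGbot : ∀ w, G w ≠ ⊥)
    (hargmin : ∃ xs : PiLp 2 E, ∀ w, Phi f G xs ≤ Phi f G w)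
    (φ : PiLp 2 E → ℝ)
    (hφ : ∀ x, ((φ x : ℝ) : EReal) = ⨅ w, Mdl f f' γ G w x)
    (x z : ℕ → PiLp 2 E) (I : ℕ → Finset (Fin N))
    (hz : ∀ k, z k ∈ Tmap f f' γ G (x k))
    (hup : ∀ (k : ℕ) (i : Fin N), x (k + 1) i = if i ∈ I (k + 1) then z k i else x k i)
    :
    ∃ Φstar : ℝ,
      (∀ k, φ (x (k + 1)) ≤ φ (x k)) ∧
      Tendsto (fun k => φ (x k)) atTop (𝓝 Φstar) ∧
      (∀ xs : PiLp 2 E, (∀ w, Phi f G xs ≤ Phi f G w) → Phi f G xs ≤ ((Φstar : ℝ) : EReal)) ∧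
      (∀ p : PiLp 2 E, MapClusterPt p atTop x → φ p = Φstar) ∧
      Summable (fun k => ‖x (k + 1) - x k‖ ^ 2) ∧
      Tendsto (fun k => ‖x (k + 1) - x k‖) atTop (𝓝 0) :=
  bc_fbe_decreases_cluster_constant_summable_general f f' L γ G hf hL hlip hγ hγL hGbot hargmin φ hφ
    x z I hz hup
end

section
/- Let x∈ℝ^{n_1}×⋯×ℝ^{n_N}, z∈T(x), and for a subset I⊆{1,…,N} let x_I^+ denote the point with coordinates (x_I^+)_i = z_i for i∈I and (x_I^+)_i = x_i for i∉I. Let (q_I)_{I⊆{1,…,N}} be probability weights (q_I ≥ 0, ∑_I q_I = 1) such that ∑_{I∋i} q_I ≥ p_i > 0 for each i. Then ∑_I q_I · φ_Γ(x_I^+) ≤ φ_Γ(x) − ∑_{i=1}^N (p_i ξ_i/(2γ_i))‖z_i − x_i‖², where ξ_i = (N − γ_i L_{f_i})/N; in particular the FBE decreases in expectation by at least (σ/2)‖x − z‖²_{Γ^{-1}} with σ = min_i p_i ξ_i. -/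
/-! Since `z` minimises the model `M(·, x)`, the envelope at a block update `y = x_I^+` is at most
`M(z, y)`, while `φ(x) = M(z, x)`. The model is separable across blocks and `y` agrees with `x`
outside `I`, so the descent lemma for each `f_i`, `i ∈ I`, gives
`φ(y) ≤ φ(x) - ∑_{i ∈ I} ξ_i/(2γ_i) ‖z_i - x_i‖²`. Averaging over `I` with the weights `q_I` and
exchanging the two sums, block `i` is weighted by `∑_{I ∋ i} q_I ≥ p_i`. -/

open Filter Topology Metric Bornology Set
open scoped RealInnerProductSpace

noncomputable section

variable {N : ℕ} {E : Fin N → Type*}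
  [∀ i, NormedAddCommGroup (E i)] [∀ i, InnerProductSpace ℝ (E i)]
  [∀ i, CompleteSpace (E i)]

theorem le_add_inner_add_of_lipschitz_gradient {X : Type*} [NormedAddCommGroup X]
    [InnerProductSpace ℝ X] [CompleteSpace X] {f : X → ℝ} {f' : X → X} {L : ℝ}
    (hf : ∀ u, HasGradientAt f (f' u) u) (hlip : ∀ u v, ‖f' u - f' v‖ ≤ L * ‖u - v‖)
    (x z : X) : f z ≤ f x + ⟪f' x, z - x⟫ + L / 2 * ‖z - x‖ ^ 2 := by
  set d := z - x
  set g : ℝ → ℝ := fun t => f (x + t • d) - t * ⟪f' x, d⟫ - L / 2 * t ^ 2 * ‖d‖ ^ 2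
  have hg : ∀ t : ℝ, HasDerivAt g (⟪f' (x + t • d) - f' x, d⟫ - L * t * ‖d‖ ^ 2) t := by
    intro t
    have hline : HasDerivAt (fun t : ℝ => x + t • d) d t := by
      simpa using ((hasDerivAt_id t).smul_const d).const_add x
    have hcomp : HasDerivAt (fun t : ℝ => f (x + t • d)) ⟪f' (x + t • d), d⟫ t :=
      (hf _).hasFDerivAt.comp_hasDerivAt t hline
    refine ((hcomp.sub ((hasDerivAt_id t).mul_const ⟪f' x, d⟫)).sub
      (((hasDerivAt_pow 2 t).const_mul (L / 2)).mul_const (‖d‖ ^ 2))).congr_deriv ?_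
    rw [inner_sub_left]
    ring
  have hanti : AntitoneOn g (Icc 0 1) := by
    refine antitoneOn_of_hasDerivWithinAt_nonpos (convex_Icc 0 1)
      (HasDerivAt.continuousOn fun t _ => hg t) (fun t _ => (hg t).hasDerivWithinAt) ?_
    intro t ht
    rw [interior_Icc] at ht
    have : ⟪f' (x + t • d) - f' x, d⟫ ≤ L * t * ‖d‖ ^ 2 :=
      calc ⟪f' (x + t • d) - f' x, d⟫ ≤ ‖f' (x + t • d) - f' x‖ * ‖d‖ := real_inner_le_norm _ _
        _ ≤ L * ‖x + t • d - x‖ * ‖d‖ := by gcongr; exact hlip _ _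
        _ = L * t * ‖d‖ ^ 2 := by
          rw [add_sub_cancel_left, norm_smul, Real.norm_eq_abs, abs_of_pos ht.1]; ring
    linarith
  have h01 := hanti (left_mem_Icc.2 zero_le_one) (right_mem_Icc.2 zero_le_one) zero_le_one
  simp only [g, zero_smul, one_smul, add_zero, add_sub_cancel, d] at h01
  linarith

theorem inv_mul_le_model_sub_of_lipschitz_gradient {X : Type*} [NormedAddCommGroup X]
    [InnerProductSpace ℝ X] [CompleteSpace X] {f : X → ℝ} {f' : X → X} {L : ℝ}
    (hf : ∀ u, HasGradientAt f (f' u) u) (hlip : ∀ u v, ‖f' u - f' v‖ ≤ L * ‖u - v‖)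
    {n γ : ℝ} (hn : 0 < n) (hγ : γ ≠ 0) (x z : X) :
    n⁻¹ * f z ≤ n⁻¹ * f x + n⁻¹ * ⟪f' x, z - x⟫ + 2⁻¹ * (γ⁻¹ * ‖z - x‖ ^ 2)
      - (n - γ * L) / n / (2 * γ) * ‖z - x‖ ^ 2 :=
  calc n⁻¹ * f z ≤ n⁻¹ * (f x + ⟪f' x, z - x⟫ + L / 2 * ‖z - x‖ ^ 2) :=
        mul_le_mul_of_nonneg_left (le_add_inner_add_of_lipschitz_gradient hf hlip x z)
          (inv_nonneg.2 hn.le)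
    _ = _ := by field_simp; ring

theorem EReal.coe_le_coe_add_sub_of_le_add_of_eq_add {u v a b : ℝ} {g : EReal}
    (hu : (u : EReal) ≤ a + g) (hv : (v : EReal) = b + g) : u ≤ v + (a - b) := by
  induction g using EReal.rec with
  | bot => simp at hv
  | top => simp at hv
  | coe g =>
    norm_cast at hu hv
    linarith

theorem fbe_blockUpdate_le (hN : 0 < N) {f : ∀ i, E i → ℝ} {f' : ∀ i, E i → E i}
    {L γ : Fin N → ℝ} {G : PiLp 2 E → EReal}
    (hf : ∀ i (u : E i), HasGradientAt (f i) (f' i u) u)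
    (hlip : ∀ i (u v : E i), ‖f' i u - f' i v‖ ≤ L i * ‖u - v‖) (hγ : ∀ i, γ i ≠ 0)
    {φ : PiLp 2 E → ℝ} (hφ : ∀ x, ((φ x : ℝ) : EReal) = ⨅ w, Mdl f f' γ G w x)
    {x z : PiLp 2 E} (hz : z ∈ Tmap f f' γ G x) (I : Finset (Fin N)) :
    φ (WithLp.toLp 2 (fun i => if i ∈ I then z i else x i))
      ≤ φ x - ∑ i ∈ I, ((N : ℝ) - γ i * L i) / N / (2 * γ i) * ‖z i - x i‖ ^ 2 := by
  set y : PiLp 2 E := WithLp.toLp 2 (fun i => if i ∈ I then z i else x i)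
  set h : ∀ i, E i → ℝ := fun i u =>
    (N : ℝ)⁻¹ * f i u + (N : ℝ)⁻¹ * ⟪f' i u, z i - u⟫ + 2⁻¹ * ((γ i)⁻¹ * ‖z i - u‖ ^ 2)
  have hsplit : ∀ w, Mdl f f' γ G z w = ((∑ i, h i (w i) : ℝ) : EReal) + G z := by
    intro w
    simp only [Mdl, Fsum, h, Finset.mul_sum, Finset.sum_add_distrib]
  have hφy : (φ y : EReal) ≤ ((∑ i, h i (y i) : ℝ) : EReal) + G z := by
    rw [hφ, ← hsplit]
    exact iInf_le _ z
  have hφx : (φ x : EReal) = ((∑ i, h i (x i) : ℝ) : EReal) + G z := by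
    rw [hφ, ← hsplit]
    exact le_antisymm (iInf_le _ z) (le_iInf hz)
  have hblock : ∀ i, h i (y i) - h i (x i) = if i ∈ I then h i (z i) - h i (x i) else 0 := by
    intro i
    split_ifs with hi <;> simp [y, hi]
  calc φ y ≤ φ x + (∑ i, h i (y i) - ∑ i, h i (x i)) :=
        EReal.coe_le_coe_add_sub_of_le_add_of_eq_add hφy hφx
    _ = φ x + ∑ i ∈ I, (h i (z i) - h i (x i)) := by
        rw [← Finset.sum_sub_distrib, Finset.sum_congr rfl fun i _ => hblock i,
          Finset.sum_ite_mem, Finset.univ_inter]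
    _ ≤ φ x + ∑ i ∈ I, -(((N : ℝ) - γ i * L i) / N / (2 * γ i) * ‖z i - x i‖ ^ 2) := by
        gcongr with i
        have := inv_mul_le_model_sub_of_lipschitz_gradient (hf i) (hlip i)
          (Nat.cast_pos.2 hN) (hγ i) (x i) (z i)
        simp only [h, sub_self, inner_zero_right, norm_zero]
        linarith
    _ = _ := by rw [Finset.sum_neg_distrib, ← sub_eq_add_neg]

theorem sum_mul_le_sub_of_le_sub_sum_mem {ι : Type*} [Fintype ι] [DecidableEq ι]
    {q : Finset ι → ℝ} (hq0 : ∀ I, 0 ≤ q I) (hq1 : ∑ I, q I = 1) {p a : ι → ℝ}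
    (ha : ∀ i, 0 ≤ a i) (hpq : ∀ i, p i ≤ ∑ I ∈ Finset.univ.filter (fun I => i ∈ I), q I)
    {u : Finset ι → ℝ} {c : ℝ} (hu : ∀ I, u I ≤ c - ∑ i ∈ I, a i) :
    ∑ I, q I * u I ≤ c - ∑ i, p i * a i :=
  calc ∑ I, q I * u I ≤ ∑ I, q I * (c - ∑ i ∈ I, a i) :=
        Finset.sum_le_sum fun I _ => mul_le_mul_of_nonneg_left (hu I) (hq0 I)
    _ = c - ∑ i, (∑ I ∈ Finset.univ.filter (fun I => i ∈ I), q I) * a i := by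
        simp only [mul_sub, Finset.sum_sub_distrib, ← Finset.sum_mul, hq1, one_mul,
          Finset.mul_sum]
        congr 1
        rw [Finset.sum_congr rfl fun i _ => Finset.sum_mul _ _ _]
        exact Finset.sum_comm' fun I i => by simp
    _ ≤ c - ∑ i, p i * a i := by
        gcongr with i
        · exact ha i
        · exact hpq i

theorem inf'_mul_sum_le {ι : Type*} {s : Finset ι} (H : s.Nonempty) {c w : ι → ℝ}
    (hw : ∀ i ∈ s, 0 ≤ w i) : s.inf' H c * ∑ i ∈ s, w i ≤ ∑ i ∈ s, c i * w i := by
  rw [Finset.mul_sum]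
  exact Finset.sum_le_sum fun i hi => mul_le_mul_of_nonneg_right (Finset.inf'_le _ hi) (hw i hi)

theorem bc_randomized_expected_descent_general (hN : 0 < N)
    (f : ∀ i, E i → ℝ) (f' : ∀ i, E i → E i) (L γ : Fin N → ℝ)
    (G : PiLp 2 E → EReal)
    (hf : ∀ i (u : E i), HasGradientAt (f i) (f' i u) u)
    (hlip : ∀ i (u v : E i), ‖f' i u - f' i v‖ ≤ L i * ‖u - v‖)
    (hγ : ∀ i, 0 < γ i) (hγL : ∀ i, γ i * L i < (N : ℝ))
    (φ : PiLp 2 E → ℝ)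
    (hφ : ∀ x, ((φ x : ℝ) : EReal) = ⨅ w, Mdl f f' γ G w x)
    (p : Fin N → ℝ)
    (q : Finset (Fin N) → ℝ) (hq0 : ∀ I, 0 ≤ q I)
    (hq1 : ∑ I : Finset (Fin N), q I = 1)
    (hpq : ∀ i : Fin N, p i ≤ ∑ I ∈ Finset.univ.filter (fun I : Finset (Fin N) => i ∈ I), q I)
    (x z : PiLp 2 E) (hz : z ∈ Tmap f f' γ G x) :
    (∑ I : Finset (Fin N), q I * φ (WithLp.toLp 2 (fun i => if i ∈ I then z i else x i))
        ≤ φ x - ∑ i, p i * (((N : ℝ) - γ i * L i) / (N : ℝ)) / (2 * γ i) * ‖z i - x i‖ ^ 2) ∧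
    (∑ I : Finset (Fin N), q I * φ (WithLp.toLp 2 (fun i => if i ∈ I then z i else x i))
        ≤ φ x - (Finset.univ.inf' (Finset.univ_nonempty_iff.mpr ⟨⟨0, hN⟩⟩)
              (fun i => p i * (((N : ℝ) - γ i * L i) / (N : ℝ)))) / 2
            * ∑ i, (γ i)⁻¹ * ‖x i - z i‖ ^ 2) := by
  have hdecrease_nonneg : ∀ i, 0 ≤ ((N : ℝ) - γ i * L i) / N / (2 * γ i) * ‖z i - x i‖ ^ 2 :=
    fun i => mul_nonneg (div_nonneg (div_nonneg (by linarith [hγL i]) N.cast_nonneg)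
      (by linarith [hγ i])) (sq_nonneg _)
  have hexpected : ∑ I : Finset (Fin N),
      q I * φ (WithLp.toLp 2 (fun i => if i ∈ I then z i else x i))
        ≤ φ x - ∑ i, p i * (((N : ℝ) - γ i * L i) / (N : ℝ)) / (2 * γ i) * ‖z i - x i‖ ^ 2 := by
    refine (sum_mul_le_sub_of_le_sub_sum_mem hq0 hq1 hdecrease_nonneg hpq
      (fbe_blockUpdate_le hN hf hlip (fun i => (hγ i).ne') hφ hz)).trans_eq ?_
    congr 1
    exact Finset.sum_congr rfl fun i _ => by ring
  refine ⟨hexpected, hexpected.trans (sub_le_sub_left ?_ _)⟩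
  set σ := Finset.univ.inf' (Finset.univ_nonempty_iff.mpr ⟨⟨0, hN⟩⟩)
    (fun i => p i * (((N : ℝ) - γ i * L i) / (N : ℝ)))
  calc σ / 2 * ∑ i, (γ i)⁻¹ * ‖x i - z i‖ ^ 2 = σ * ∑ i, (2 * γ i)⁻¹ * ‖z i - x i‖ ^ 2 := by
        rw [Finset.mul_sum, Finset.mul_sum]
        refine Finset.sum_congr rfl fun i _ => ?_
        rw [norm_sub_rev, mul_inv]
        ring
    _ ≤ ∑ i, p i * (((N : ℝ) - γ i * L i) / (N : ℝ)) * ((2 * γ i)⁻¹ * ‖z i - x i‖ ^ 2) :=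
        inf'_mul_sum_le _ fun i _ =>
          mul_nonneg (inv_nonneg.2 (by linarith [hγ i])) (sq_nonneg _)
    _ = _ := Finset.sum_congr rfl fun i _ => by ring

/-- randomized one-step descent in expectation, cf. (3.3)-(3.4):
for sampling weights q_I with ∑_{I∋i} q_I ≥ p_i > 0, the expected FBE after one BC update
decreases by ∑ᵢ pᵢξᵢ/(2γᵢ)‖zᵢ-xᵢ‖², hence by (σ/2)‖x-z‖²_{Γ⁻¹} with σ = minᵢ pᵢξᵢ. -/
theorem bc_randomized_expected_descent (hN : 0 < N)
    (f : ∀ i, E i → ℝ) (f' : ∀ i, E i → E i) (L γ : Fin N → ℝ)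
    (G : PiLp 2 E → EReal)
    (hf : ∀ i (u : E i), HasGradientAt (f i) (f' i u) u)
    (hL : ∀ i, 0 ≤ L i)
    (hlip : ∀ i (u v : E i), ‖f' i u - f' i v‖ ≤ L i * ‖u - v‖)
    (hγ : ∀ i, 0 < γ i) (hγL : ∀ i, γ i * L i < (N : ℝ))
    (hGlsc : LowerSemicontinuous G)
    (hGproper : ∃ w, G w ≠ ⊤) (hGbot : ∀ w, G w ≠ ⊥)
    (hargmin : ∃ xs : PiLp 2 E, ∀ w, Phi f G xs ≤ Phi f G w)
    (φ : PiLp 2 E → ℝ)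
    (hφ : ∀ x, ((φ x : ℝ) : EReal) = ⨅ w, Mdl f f' γ G w x)
    (p : Fin N → ℝ) (hp : ∀ i, 0 < p i)
    (q : Finset (Fin N) → ℝ) (hq0 : ∀ I, 0 ≤ q I)
    (hq1 : ∑ I : Finset (Fin N), q I = 1)
    (hpq : ∀ i : Fin N, p i ≤ ∑ I ∈ Finset.univ.filter (fun I : Finset (Fin N) => i ∈ I), q I)
    (x z : PiLp 2 E) (hz : z ∈ Tmap f f' γ G x) :
    (∑ I : Finset (Fin N), q I * φ (WithLp.toLp 2 (fun i => if i ∈ I then z i else x i))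
        ≤ φ x - ∑ i, p i * (((N : ℝ) - γ i * L i) / (N : ℝ)) / (2 * γ i) * ‖z i - x i‖ ^ 2) ∧
    (∑ I : Finset (Fin N), q I * φ (WithLp.toLp 2 (fun i => if i ∈ I then z i else x i))
        ≤ φ x - (Finset.univ.inf' (Finset.univ_nonempty_iff.mpr ⟨⟨0, hN⟩⟩)
              (fun i => p i * (((N : ℝ) - γ i * L i) / (N : ℝ)))) / 2
            * ∑ i, (γ i)⁻¹ * ‖x i - z i‖ ^ 2) :=
  bc_randomized_expected_descent_general hN f f' L γ G hf hlip hγ hγL φ hφ p q hq0 hq1 hpq x z hz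
end
end

section
/- If G is convex and each f_i is μ_{f_i}-strongly convex, then for every x∈ℝ^{n_1}×⋯×ℝ^{n_N}, with z=T(x), one has φ_Γ(x) − min Φ ≤ ½ ∑_{i=1}^N ((N − γ_i μ_{f_i})/(γ_i² μ_{f_i})) ‖z_i − x_i‖², i.e., φ_Γ(x) − min Φ ≤ ½‖z − x‖²_{Γ^{-2}μ_F^{-1}(I − Γμ_F)} with μ_F=(1/N)·blockdiag(μ_{f_1}I_{n_1},…,μ_{f_N}I_{n_N}). -/
open Filter Topology Metric Bornology Set
open scoped RealInnerProductSpace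

noncomputable section

variable {N : ℕ} {E : Fin N → Type*}
  [∀ i, NormedAddCommGroup (E i)] [∀ i, InnerProductSpace ℝ (E i)]
  [∀ i, CompleteSpace (E i)]

/-! For fixed `x`, the model `w ↦ M(w, x)` is the convex `G` plus a quadratic whose Hessian is
exactly `Γ⁻¹`, so its minimizer `z = T(x)` has quadratic growth:
`M(z, x) + ½‖w - z‖²_{Γ⁻¹} ≤ M(w, x)` for all `w`. At `w = x⋆`, strong convexity of the `fᵢ`
bounds the smooth part of `M(x⋆, x)` by `F(x⋆) + ½‖x⋆ - x‖²_{Γ⁻¹ - μ_F}`, so `φ_Γ(x) - Φ(x⋆)` is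
at most `∑ᵢ ½(γᵢ⁻¹ - μᵢ/N)‖x⋆ᵢ - xᵢ‖² - ½γᵢ⁻¹‖zᵢ - x⋆ᵢ‖²`; completing the square in `x⋆ᵢ`
bounds each summand by `½ (N - γᵢμᵢ)/(γᵢ²μᵢ) ‖zᵢ - xᵢ‖²`. -/
section Convex
variable {X : Type*} [NormedAddCommGroup X] [NormedSpace ℝ X]

theorem ConvexOn.add_fderiv_sub_le {h : X → ℝ} {h' : X →L[ℝ] ℝ} {x : X}
    (hc : ConvexOn ℝ univ h) (hd : HasFDerivAt h h' x) (y : X) :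
    h x + h' (y - x) ≤ h y := by
  have hline : ConvexOn ℝ univ (h ∘ AffineMap.lineMap (k := ℝ) x y) := hc.comp_affineMap _
  have hder : HasDerivAt (h ∘ AffineMap.lineMap (k := ℝ) x y) (h' (y - x)) 0 := by
    rw [← AffineMap.lineMap_apply_zero x y (k := ℝ)] at hd
    exact hd.comp_hasDerivAt 0 AffineMap.hasDerivAt_lineMap
  have := hline.le_slope_of_hasDerivAt (mem_univ 0) (mem_univ 1) one_pos hder
  simp only [slope_def_field, Function.comp_apply, AffineMap.lineMap_apply_zero,
    AffineMap.lineMap_apply_one, sub_zero, div_one] at this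
  linarith

end Convex

section InnerProduct
variable {X : Type*} [NormedAddCommGroup X] [InnerProductSpace ℝ X]

theorem StrongConvexOn.add_inner_add_le [CompleteSpace X] {f : X → ℝ} {g x : X} {μ : ℝ}
    (hsc : StrongConvexOn univ μ f) (hf : HasGradientAt f g x) (y : X) :
    f x + ⟪g, y - x⟫ + μ / 2 * ‖y - x‖ ^ 2 ≤ f y := by
  have hd := hf.hasFDerivAt.sub ((hasStrictFDerivAt_norm_sq x).hasFDerivAt.const_mul (μ / 2))
  have := (strongConvexOn_iff_convex.mp hsc).add_fderiv_sub_le hd y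
  simp only [sub_apply, InnerProductSpace.toDual_apply_apply, smul_apply, innerSL_apply_apply,
    smul_eq_mul, nsmul_eq_mul, Nat.cast_ofNat] at this
  have hy : ‖y‖ ^ 2 = ‖x‖ ^ 2 + 2 * ⟪x, y - x⟫ + ‖y - x‖ ^ 2 := by
    rw [← norm_add_sq_real, add_sub_cancel]
  rw [hy] at this
  linarith

theorem norm_smul_add_smul_sq {a b : ℝ} (hab : a + b = 1) (p q : X) :
    ‖a • p + b • q‖ ^ 2 = a * ‖p‖ ^ 2 + b * ‖q‖ ^ 2 - a * b * ‖p - q‖ ^ 2 := by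
  rw [norm_add_sq_real, norm_sub_sq_real, norm_smul, norm_smul, real_inner_smul_left,
    real_inner_smul_right, Real.norm_eq_abs, Real.norm_eq_abs, mul_pow, mul_pow, sq_abs, sq_abs]
  obtain rfl := eq_sub_of_add_eq hab
  ring

theorem mul_norm_sq_sub_mul_norm_sq_le {a b : ℝ} (hab : a < b) (p q : X) :
    a * ‖p‖ ^ 2 - b * ‖q‖ ^ 2 ≤ a * b / (b - a) * ‖q - p‖ ^ 2 := by
  have key : (b - a) * (a * b / (b - a) * ‖q - p‖ ^ 2 - (a * ‖p‖ ^ 2 - b * ‖q‖ ^ 2))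
      = ‖a • p - b • q‖ ^ 2 := by
    rw [norm_sub_sq_real, norm_sub_sq_real, norm_smul, norm_smul, real_inner_smul_left,
      real_inner_smul_right, Real.norm_eq_abs, Real.norm_eq_abs, mul_pow, mul_pow, sq_abs, sq_abs,
      real_inner_comm]
    field_simp [(sub_pos.2 hab).ne']
    ring
  exact sub_nonneg.1 (nonneg_of_mul_nonneg_right (key ▸ sq_nonneg _) (sub_pos.2 hab))

theorem inv_sub_div_mul_norm_sq_sub_le {γ μ n : ℝ} (hγ : 0 < γ) (hμ : 0 < μ) (hn : 0 < n)
    (p x z : X) :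
    (γ⁻¹ - μ / n) * ‖p - x‖ ^ 2 - γ⁻¹ * ‖p - z‖ ^ 2
      ≤ (n - γ * μ) / (γ ^ 2 * μ) * ‖z - x‖ ^ 2 := by
  have hab : γ⁻¹ - μ / n < γ⁻¹ := sub_lt_self _ (div_pos hμ hn)
  have hcoef : (γ⁻¹ - μ / n) * γ⁻¹ / (γ⁻¹ - (γ⁻¹ - μ / n)) = (n - γ * μ) / (γ ^ 2 * μ) := by
    field_simp
    ring
  have := mul_norm_sq_sub_mul_norm_sq_le hab (p - x) (p - z)
  rwa [hcoef, sub_sub_sub_cancel_left, norm_sub_rev x] at this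

end InnerProduct

section Segment
variable {X : Type*} [AddCommGroup X] [Module ℝ X]

theorem ERealConvex.quadratic_growth {G : X → EReal} (hG : ERealConvex G) {c : X → ℝ}
    {z w : X} {Q gz gw : ℝ}
    (hc : ∀ t ∈ Ioo (0 : ℝ) 1,
      c ((1 - t) • z + t • w) ≤ (1 - t) * c z + t * c w - (1 - t) * t * Q)
    (hGz : G z = gz) (hGw : G w = gw) (hmin : ∀ v, ((c z : ℝ) : EReal) + G z ≤ c v + G v) :
    c z + gz + Q ≤ c w + gw := by
  have hseg : ∀ t ∈ Ioo (0 : ℝ) 1, c z + gz + (1 - t) * Q ≤ c w + gw := by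
    intro t ht
    have hGt : G ((1 - t) • z + t • w) ≤ (((1 - t) * gz + t * gw : ℝ) : EReal) := by
      have := hG z w (1 - t) t (by linarith [ht.2]) ht.1.le (by ring)
      rwa [hGz, hGw, ← EReal.coe_mul, ← EReal.coe_mul, ← EReal.coe_add] at this
    have hle : c z + gz ≤ c ((1 - t) • z + t • w) + ((1 - t) * gz + t * gw) := by
      have := (hmin _).trans (add_le_add_right hGt _)
      rwa [hGz, ← EReal.coe_add, ← EReal.coe_add, EReal.coe_le_coe_iff] at this
    have : t * (c z + gz + (1 - t) * Q) ≤ t * (c w + gw) := by nlinarith [hc t ht]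
    exact le_of_mul_le_mul_left this ht.1
  have hlim : Tendsto (fun t : ℝ => c z + gz + (1 - t) * Q) (𝓝[>] 0) (𝓝 (c z + gz + Q)) := by
    have : Continuous fun t : ℝ => c z + gz + (1 - t) * Q := by fun_prop
    simpa using (this.tendsto 0).mono_left nhdsWithin_le_nhds
  exact le_of_tendsto hlim (eventually_of_mem (Ioo_mem_nhdsGT one_pos) hseg)

end Segment

theorem EReal.eq_coe_sub_of_coe_add_eq_coe {x : EReal} {a b : ℝ} (h : (a : EReal) + x = b) :
    x = ((b - a : ℝ) : EReal) := by
  induction x using EReal.rec with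
  | bot => simp at h
  | coe r =>
    rw [← EReal.coe_add, EReal.coe_eq_coe_iff] at h
    rw [EReal.coe_eq_coe_iff]
    linarith
  | top => simp at h

section WeightedDist
variable {ι : Type*} [Fintype ι] {F : ι → Type*} [∀ i, NormedAddCommGroup (F i)]
  [∀ i, InnerProductSpace ℝ (F i)]

def halfWeightedSqDist (γ : ι → ℝ) (u v : PiLp 2 F) : ℝ := 2⁻¹ * ∑ i, (γ i)⁻¹ * ‖u i - v i‖ ^ 2

theorem halfWeightedSqDist_segment (γ : ι → ℝ) (t : ℝ) (z w x : PiLp 2 F) :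
    halfWeightedSqDist γ ((1 - t) • z + t • w) x
      = (1 - t) * halfWeightedSqDist γ z x + t * halfWeightedSqDist γ w x
        - (1 - t) * t * halfWeightedSqDist γ z w := by
  have hcomp : ∀ i, ((1 - t) • z + t • w) i - x i = (1 - t) • (z i - x i) + t • (w i - x i) := by
    intro i
    simp only [PiLp.add_apply, PiLp.smul_apply]
    module
  simp only [halfWeightedSqDist, hcomp, norm_smul_add_smul_sq (sub_add_cancel 1 t),
    sub_sub_sub_cancel_right, Finset.mul_sum, ← Finset.sum_sub_distrib, ← Finset.sum_add_distrib]
  refine Finset.sum_congr rfl fun i _ => ?_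
  ring

end WeightedDist

section Model
variable {n : ℕ} {F : Fin n → Type*} [∀ i, NormedAddCommGroup (F i)]
  [∀ i, InnerProductSpace ℝ (F i)]

def smoothModel (f : ∀ i, F i → ℝ) (f' : ∀ i, F i → F i) (γ : Fin n → ℝ) (x w : PiLp 2 F) : ℝ :=
  Fsum f x + (n : ℝ)⁻¹ * ∑ i, ⟪f' i (x i), w i - x i⟫ + halfWeightedSqDist γ w x

theorem Mdl_eq_smoothModel_add (f : ∀ i, F i → ℝ) (f' : ∀ i, F i → F i) (γ : Fin n → ℝ)
    (G : PiLp 2 F → EReal) (w x : PiLp 2 F) :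
    Mdl f f' γ G w x = ((smoothModel f f' γ x w : ℝ) : EReal) + G w := rfl

theorem smoothModel_segment (f : ∀ i, F i → ℝ) (f' : ∀ i, F i → F i) (γ : Fin n → ℝ)
    (t : ℝ) (x z w : PiLp 2 F) :
    smoothModel f f' γ x ((1 - t) • z + t • w)
      = (1 - t) * smoothModel f f' γ x z + t * smoothModel f f' γ x w
        - (1 - t) * t * halfWeightedSqDist γ z w := by
  have hlin : ∑ i, ⟪f' i (x i), ((1 - t) • z + t • w) i - x i⟫
      = (1 - t) * ∑ i, ⟪f' i (x i), z i - x i⟫ + t * ∑ i, ⟪f' i (x i), w i - x i⟫ := by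
    simp only [Finset.mul_sum, ← Finset.sum_add_distrib, ← real_inner_smul_right,
      ← inner_add_right]
    refine Finset.sum_congr rfl fun i _ => ?_
    congr 1
    simp only [PiLp.add_apply, PiLp.smul_apply]
    module
  rw [smoothModel, smoothModel, smoothModel, hlin, halfWeightedSqDist_segment]
  ring

theorem smoothModel_add_le [∀ i, CompleteSpace (F i)] {f : ∀ i, F i → ℝ} {f' : ∀ i, F i → F i} {μ : Fin n → ℝ}
    (hf : ∀ i (u : F i), HasGradientAt (f i) (f' i u) u)
    (hsc : ∀ i, StrongConvexOn univ (μ i) (f i)) (γ : Fin n → ℝ) (x w : PiLp 2 F) :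
    smoothModel f f' γ x w + (n : ℝ)⁻¹ * ∑ i, μ i / 2 * ‖w i - x i‖ ^ 2
      ≤ Fsum f w + halfWeightedSqDist γ w x := by
  have hsum : ∑ i, (f i (x i) + ⟪f' i (x i), w i - x i⟫ + μ i / 2 * ‖w i - x i‖ ^ 2)
      ≤ ∑ i, f i (w i) :=
    Finset.sum_le_sum fun i _ => (hsc i).add_inner_add_le (hf i (x i)) (w i)
  have := mul_le_mul_of_nonneg_left hsum (inv_nonneg.2 (Nat.cast_nonneg n : (0 : ℝ) ≤ n))
  simp only [Finset.sum_add_distrib, mul_add] at this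
  simp only [smoothModel, Fsum]
  linarith

theorem halfWeightedSqDist_sub_sub_le {γ μ : Fin n → ℝ} (hγ : ∀ i, 0 < γ i) (hμ : ∀ i, 0 < μ i)
    (p x z : PiLp 2 F) :
    halfWeightedSqDist γ p x - (n : ℝ)⁻¹ * ∑ i, μ i / 2 * ‖p i - x i‖ ^ 2
        - halfWeightedSqDist γ z p
      ≤ 2⁻¹ * ∑ i, (((n : ℝ) - γ i * μ i) / (γ i ^ 2 * μ i)) * ‖z i - x i‖ ^ 2 := by
  simp only [halfWeightedSqDist, Finset.mul_sum, ← Finset.sum_sub_distrib]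
  gcongr with i
  have hsplit : 2⁻¹ * ((γ i)⁻¹ * ‖p i - x i‖ ^ 2) - (n : ℝ)⁻¹ * (μ i / 2 * ‖p i - x i‖ ^ 2)
      = 2⁻¹ * (((γ i)⁻¹ - μ i / n) * ‖p i - x i‖ ^ 2) := by ring
  have := inv_sub_div_mul_norm_sq_sub_le (hγ i) (hμ i) (Nat.cast_pos.2 i.pos) (p i) (x i) (z i)
  rw [norm_sub_rev (z i)]
  linarith

end Model

theorem fbe_strongly_convex_upper_bound_general
    (f : ∀ i, E i → ℝ) (f' : ∀ i, E i → E i) (γ : Fin N → ℝ)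
    (G : PiLp 2 E → EReal)
    (hf : ∀ i (u : E i), HasGradientAt (f i) (f' i u) u)
    (hγ : ∀ i, 0 < γ i)
    (φ : PiLp 2 E → ℝ)
    (hφ : ∀ x, ((φ x : ℝ) : EReal) = ⨅ w, Mdl f f' γ G w x)
    (μ : Fin N → ℝ) (hμ : ∀ i, 0 < μ i)
    (hsc : ∀ i, StrongConvexOn Set.univ (μ i) (f i))
    (hGconv : ERealConvex G)
    (xs : PiLp 2 E)
    (m : ℝ) (hm : ((m : ℝ) : EReal) = Phi f G xs)
    (x z : PiLp 2 E) (hz : z ∈ Tmap f f' γ G x) :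
    φ x - m ≤ 2⁻¹ * ∑ i, (((N : ℝ) - γ i * μ i) / (γ i ^ 2 * μ i)) * ‖z i - x i‖ ^ 2 := by
  have hMz : ((smoothModel f f' γ x z : ℝ) : EReal) + G z = φ x := by
    rw [← Mdl_eq_smoothModel_add, hφ x]
    exact le_antisymm (le_iInf hz) (iInf_le _ z)
  have hGz := EReal.eq_coe_sub_of_coe_add_eq_coe hMz
  have hGxs := EReal.eq_coe_sub_of_coe_add_eq_coe hm.symm
  have hgrowth := hGconv.quadratic_growth (fun t _ => (smoothModel_segment f f' γ t x z xs).le)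
    hGz hGxs hz
  have hsmooth := smoothModel_add_le hf hsc γ x xs
  have hterms := halfWeightedSqDist_sub_sub_le hγ hμ xs x z
  linarith

/-- inequality (3.6): with G convex and fᵢ μ_{f_i}-strongly convex,
φ_Γ(x) - min Φ ≤ ½ ∑ᵢ ((N-γᵢμᵢ)/(γᵢ²μᵢ)) ‖zᵢ-xᵢ‖² for z = T(x). -/
theorem fbe_strongly_convex_upper_bound
    (f : ∀ i, E i → ℝ) (f' : ∀ i, E i → E i) (L γ : Fin N → ℝ)
    (G : PiLp 2 E → EReal)
    (hf : ∀ i (u : E i), HasGradientAt (f i) (f' i u) u)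
    (hL : ∀ i, 0 ≤ L i)
    (hlip : ∀ i (u v : E i), ‖f' i u - f' i v‖ ≤ L i * ‖u - v‖)
    (hγ : ∀ i, 0 < γ i) (hγL : ∀ i, γ i * L i < (N : ℝ))
    (hGlsc : LowerSemicontinuous G)
    (hGproper : ∃ w, G w ≠ ⊤) (hGbot : ∀ w, G w ≠ ⊥)
    (hargmin : ∃ xs : PiLp 2 E, ∀ w, Phi f G xs ≤ Phi f G w)
    (φ : PiLp 2 E → ℝ)
    (hφ : ∀ x, ((φ x : ℝ) : EReal) = ⨅ w, Mdl f f' γ G w x)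
    (μ : Fin N → ℝ) (hμ : ∀ i, 0 < μ i)
    (hsc : ∀ i, StrongConvexOn Set.univ (μ i) (f i))
    (hGconv : ERealConvex G)
    (xs : PiLp 2 E) (hxs : ∀ w, Phi f G xs ≤ Phi f G w)
    (m : ℝ) (hm : ((m : ℝ) : EReal) = Phi f G xs)
    (x z : PiLp 2 E) (hz : z ∈ Tmap f f' γ G x) :
    φ x - m ≤ 2⁻¹ * ∑ i, (((N : ℝ) - γ i * μ i) / (γ i ^ 2 * μ i)) * ‖z i - x i‖ ^ 2 :=
  fbe_strongly_convex_upper_bound_general f f' γ G hf hγ φ hφ μ hμ hsc hGconv xs m hm x z hz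
end
end
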